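/- arXiv:math/0402373 — 12 statements merged into one kernel-verified Lean document; each statement's English description precedes it below -/
import Mathlib

section
/- The only integer solution of the equation w² = −6·x⁴ − 3·y⁴ + 2·z⁴ is w = x = y = z = 0. -/
/-!
Fourth powers are `0` or `1` modulo `16`, and `0, 1, 4, 9` are the only squares there, so in a
solution `x, y, z` are all even or all odd; dividing out common prime factors we may assume they
are all odd. The identity `w² + (2x² - y²)² = 2AB` with `A = x² + y² + z²`, `B = z² - x² - y²`
makes `AB` a sum of two squares, while `A ≡ B ≡ 3 (mod 4)`. A prime `q ≡ 3 (mod 4)` dividing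
both `A` and `B` divides `z²` and `x² + y²`, hence `x, y, z`. As `A ≡ 3 (mod 4)` is not a sum of
two squares, some such prime divides `A` to an odd power and does not divide `B`, so `AB` is not
a sum of two squares either.
-/

theorem Nat.not_exists_sq_add_sq_of_mod_four_eq_three {n : ℕ} (hn : n % 4 = 3) :
    ¬ ∃ x y, n = x ^ 2 + y ^ 2 := by
  rintro ⟨x, y, rfl⟩
  have h : ((x ^ 2 + y ^ 2 : ℕ) : ZMod 4) = 3 := by rw [← ZMod.natCast_mod, hn]; rfl
  push_cast at h
  revert h
  generalize (x : ZMod 4) = u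
  generalize (y : ZMod 4) = v
  revert u v
  decide

theorem Nat.not_exists_sq_add_sq_mul {A B : ℕ} (hA : ¬ ∃ x y, A = x ^ 2 + y ^ 2) (hB : B ≠ 0)
    (hAB : ∀ q, q.Prime → q % 4 = 3 → q ∣ A → ¬ q ∣ B) : ¬ ∃ x y, A * B = x ^ 2 + y ^ 2 := by
  have hA0 : A ≠ 0 := by rintro rfl; exact hA ⟨0, 0, rfl⟩
  rw [Nat.eq_sq_add_sq_iff] at hA ⊢
  push Not at hA
  obtain ⟨q, hqA, hq4, hodd⟩ := hA
  have hq := Nat.prime_of_mem_primeFactors hqA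
  have : Fact q.Prime := ⟨hq⟩
  have hqB : ¬ q ∣ B := hAB q hq hq4 (Nat.dvd_of_mem_primeFactors hqA)
  intro H
  have := H q (Nat.mem_primeFactors.2 ⟨hq, (Nat.dvd_of_mem_primeFactors hqA).mul_right B,
    mul_ne_zero hA0 hB⟩) hq4
  rw [padicValNat.mul hA0 hB, padicValNat.eq_zero_of_not_dvd hqB, add_zero] at this
  exact hodd this

theorem Int.mul_ne_sq_add_sq_of_emod_four_eq_three {A B : ℤ} (hA : 0 ≤ A) (hA4 : A % 4 = 3)
    (hB : B ≠ 0) (hAB : ∀ q : ℕ, q.Prime → q % 4 = 3 → (q : ℤ) ∣ A → ¬ (q : ℤ) ∣ B) (a b : ℤ) :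
    A * B ≠ a ^ 2 + b ^ 2 := by
  intro h
  have hB' : 0 ≤ B := by
    refine nonneg_of_mul_nonneg_right ?_ (by omega : 0 < A)
    rw [h]; positivity
  lift A to ℕ using hA
  lift B to ℕ using hB'
  refine Nat.not_exists_sq_add_sq_mul
    (Nat.not_exists_sq_add_sq_of_mod_four_eq_three (n := A) (by omega)) (by exact_mod_cast hB)
    (fun q hq hq4 hqA hqB => hAB q hq hq4 ?_ ?_) ⟨a.natAbs, b.natAbs, ?_⟩
  · exact_mod_cast hqA
  · exact_mod_cast hqB
  · zify; simpa only [sq_abs] using h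

theorem Int.dvd_of_dvd_sq_add_sq_of_mod_four_eq_three {q : ℕ} [Fact q.Prime] (hq : q % 4 = 3)
    {a b : ℤ} (h : (q : ℤ) ∣ a ^ 2 + b ^ 2) : (q : ℤ) ∣ b := by
  by_contra hb
  rw [← ZMod.intCast_zmod_eq_zero_iff_dvd] at h hb
  push_cast at h
  exact ZMod.mod_four_ne_three_of_sq_eq_neg_sq' hb (eq_neg_of_add_eq_zero_left h) hq

theorem Nat.Prime.intCast_dvd_of_dvd_two_mul {q : ℕ} (hq : q.Prime) (hq2 : q ≠ 2) {a : ℤ}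
    (h : (q : ℤ) ∣ 2 * a) : (q : ℤ) ∣ a :=
  ((Nat.prime_iff_prime_int.1 hq).dvd_or_dvd h).resolve_left fun h2 =>
    hq2 ((Nat.prime_dvd_prime_iff_eq hq Nat.prime_two).1 (by exact_mod_cast h2))

theorem ZMod.intCast_pow_four_eq_ite_even (x : ℤ) :
    (x : ZMod 16) ^ 4 = if Even x then 0 else 1 := by
  rcases Int.even_or_odd' x with ⟨k, rfl | rfl⟩
  · simp only [even_two_mul, if_true]
    push_cast
    generalize (k : ZMod 16) = u
    revert u
    decide
  · simp only [Int.not_even_two_mul_add_one, if_false]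
    push_cast
    generalize (k : ZMod 16) = u
    revert u
    decide

section Solutions

variable {w x y z : ℤ}

theorem all_even_or_all_odd_of_solution (h : w ^ 2 = -6 * x ^ 4 - 3 * y ^ 4 + 2 * z ^ 4) :
    (Even x ∧ Even y ∧ Even z) ∨ (Odd x ∧ Odd y ∧ Odd z) := by
  have h16 := congrArg (Int.cast : ℤ → ZMod 16) h
  push_cast [ZMod.intCast_pow_four_eq_ite_even] at h16
  generalize (w : ZMod 16) = u at h16
  simp only [← Int.not_even_iff_odd]
  split_ifs at h16 <;> first | tauto | (exfalso; norm_num at h16; revert u h16; decide)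

theorem not_solution_of_primitive (h : w ^ 2 = -6 * x ^ 4 - 3 * y ^ 4 + 2 * z ^ 4)
    (hprim : ∀ p : ℕ, p.Prime → (p : ℤ) ∣ x → (p : ℤ) ∣ y → ¬ (p : ℤ) ∣ z) : False := by
  obtain ⟨hx, hy, hz⟩ : Odd x ∧ Odd y ∧ Odd z := (all_even_or_all_odd_of_solution h).resolve_left
    fun ⟨hx, hy, hz⟩ => hprim 2 Nat.prime_two hx.two_dvd hy.two_dvd hz.two_dvd
  have hx4 := Int.sq_mod_four_eq_one_of_odd hx
  have hy4 := Int.sq_mod_four_eq_one_of_odd hy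
  have hz4 := Int.sq_mod_four_eq_one_of_odd hz
  have hAB := Int.sq_add_sq_of_two_mul_sq_add_sq
    (m := (x ^ 2 + y ^ 2 + z ^ 2) * (z ^ 2 - x ^ 2 - y ^ 2)) (x := w) (y := 2 * x ^ 2 - y ^ 2)
    (by linear_combination -h)
  refine Int.mul_ne_sq_add_sq_of_emod_four_eq_three (by positivity) (by omega) (by omega) ?_ _ _ hAB
  intro q hq hq4 hqA hqB
  have : Fact q.Prime := ⟨hq⟩
  have hq2 : q ≠ 2 := by omega
  have hqz : (q : ℤ) ∣ z := (Nat.prime_iff_prime_int.1 hq).dvd_of_dvd_pow (n := 2)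
    (hq.intCast_dvd_of_dvd_two_mul hq2 (by
      rw [show 2 * z ^ 2 = x ^ 2 + y ^ 2 + z ^ 2 + (z ^ 2 - x ^ 2 - y ^ 2) by ring]
      exact dvd_add hqA hqB))
  have hqxy : (q : ℤ) ∣ x ^ 2 + y ^ 2 :=
    hq.intCast_dvd_of_dvd_two_mul hq2 (by
      rw [show 2 * (x ^ 2 + y ^ 2) = x ^ 2 + y ^ 2 + z ^ 2 - (z ^ 2 - x ^ 2 - y ^ 2) by ring]
      exact dvd_sub hqA hqB)
  exact hprim q hq (Int.dvd_of_dvd_sq_add_sq_of_mod_four_eq_three hq4 (add_comm (x ^ 2) _ ▸ hqxy))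
    (Int.dvd_of_dvd_sq_add_sq_of_mod_four_eq_three hq4 hqxy) hqz

theorem exists_solution_of_dvd {d : ℤ} (hd : d ≠ 0)
    (h : w ^ 2 = -6 * (d * x) ^ 4 - 3 * (d * y) ^ 4 + 2 * (d * z) ^ 4) :
    ∃ w', w' ^ 2 = -6 * x ^ 4 - 3 * y ^ 4 + 2 * z ^ 4 := by
  obtain ⟨w', rfl⟩ : d ^ 2 ∣ w :=
    (Int.pow_dvd_pow_iff two_ne_zero).1 ⟨-6 * x ^ 4 - 3 * y ^ 4 + 2 * z ^ 4, by rw [h]; ring⟩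
  exact ⟨w', mul_left_cancel₀ (pow_ne_zero 4 hd) (by linear_combination h)⟩

theorem z_eq_zero_of_solution (h : w ^ 2 = -6 * x ^ 4 - 3 * y ^ 4 + 2 * z ^ 4) : z = 0 := by
  induction hn : z.natAbs using Nat.strong_induction_on generalizing w x y z with
  | _ n ih =>
  by_contra hz
  by_cases hprim : ∀ p : ℕ, p.Prime → (p : ℤ) ∣ x → (p : ℤ) ∣ y → ¬ (p : ℤ) ∣ z
  · exact not_solution_of_primitive h hprim
  push Not at hprim
  obtain ⟨p, hp, ⟨x, rfl⟩, ⟨y, rfl⟩, ⟨z, rfl⟩⟩ := hprim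
  obtain ⟨w', hw'⟩ := exists_solution_of_dvd (by exact_mod_cast hp.ne_zero) h
  have hz' : z ≠ 0 := by rintro rfl; simp at hz
  have hlt : z.natAbs < n := by
    rw [← hn, Int.natAbs_mul, Int.natAbs_natCast]
    exact lt_mul_left (Int.natAbs_pos.2 hz') hp.one_lt
  exact hz' (ih _ hlt hw' rfl)

end Solutions

/-- The only integer solution of `w² = −6x⁴ − 3y⁴ + 2z⁴` is `w = x = y = z = 0`. -/
theorem only_trivial_solution_minus6_minus3_2 (w x y z : ℤ)
    (h : w ^ 2 = -6 * x ^ 4 - 3 * y ^ 4 + 2 * z ^ 4) :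
    w = 0 ∧ x = 0 ∧ y = 0 ∧ z = 0 := by
  obtain rfl := z_eq_zero_of_solution h
  have hw : 0 ≤ w ^ 2 := by positivity
  have hx : 0 ≤ x ^ 4 := by positivity
  have hy : 0 ≤ y ^ 4 := by positivity
  exact ⟨pow_eq_zero_iff two_ne_zero |>.1 (by linarith),
    pow_eq_zero_iff four_ne_zero |>.1 (by linarith),
    pow_eq_zero_iff four_ne_zero |>.1 (by linarith), rfl⟩
end

section
/- Let p be a prime with p ≡ 3 (mod 16). Then the equation w² = −2p·x⁴ − p·y⁴ + 2·z⁴ has, for every prime q, a solution (w, x, y, z) ∈ ℚ_q⁴ with (x, y, z) ≠ (0, 0, 0), and it also has a solution (w, x, y, z) ∈ ℝ⁴ with (x, y, z) ≠ (0, 0, 0). -/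
/-!
Each point can be taken on a coordinate stratum where the equation asks for a single square or
fourth root. Over `ℝ` take `(√2, 0, 0, 1)`. Over `ℚ_2` take `x = y = z = 1`: then `w² = 2 - 3p`,
and `2 - 3p ≡ 1 (mod 8)` is a `2`-adic square. Over `ℚ_p` take `(w, x, z) = (p, 1, 0)`, which
asks for `y⁴ = -(2 + p)`: modulo `p ≡ 3 (mod 8)` the number `-2` is a square while `2 = s · (-s)`
is not, so one of the square roots `±s` of `-2` is itself a square, and Hensel's lemma lifts the
resulting fourth root. For every other `q`, one of `2`, `-p`, `-2p` is a nonzero square modulo `q`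
(a product of two non-squares is a square), and it lifts to `ℚ_q`.
-/

open Polynomial PadicInt

def HasNontrivialPoint (K : Type*) [Field K] (p : ℕ) : Prop :=
  ∃ w x y z : K, w ^ 2 = -2 * p * x ^ 4 - p * y ^ 4 + 2 * z ^ 4 ∧ (x, y, z) ≠ (0, 0, 0)

theorem FiniteField.isSquare_mul_of_not_isSquare {F : Type*} [Field F] [Fintype F]
    [DecidableEq F] {a b : F} (ha : ¬IsSquare a) (hb : ¬IsSquare b) : IsSquare (a * b) := by
  have ha0 : a ≠ 0 := by rintro rfl; exact ha IsSquare.zero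
  have hb0 : b ≠ 0 := by rintro rfl; exact hb IsSquare.zero
  rw [← quadraticChar_one_iff_isSquare (mul_ne_zero ha0 hb0), map_mul,
    quadraticChar_neg_one_iff_not_isSquare.mpr ha, quadraticChar_neg_one_iff_not_isSquare.mpr hb]
  rfl

theorem ZMod.exists_pow_four_eq_neg_two {p : ℕ} [Fact p.Prime] (hp : p % 8 = 3) :
    ∃ v : ZMod p, v ^ 4 = -2 := by
  obtain ⟨s, hs⟩ := (ZMod.exists_sq_eq_neg_two_iff (by omega)).mpr (Or.inr hp)
  have h2 : ¬IsSquare (2 : ZMod p) := by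
    rw [ZMod.exists_sq_eq_two_iff (by omega)]
    omega
  have hsq : IsSquare s ∨ IsSquare (-s) := by
    by_contra! h
    exact h2 (by simpa [← hs] using FiniteField.isSquare_mul_of_not_isSquare h.1 h.2)
  obtain ⟨t, ht⟩ | ⟨t, ht⟩ := hsq
  · exact ⟨t, by linear_combination -(s + t * t) * ht - hs⟩
  · exact ⟨t, by linear_combination (s - t * t) * ht - hs⟩

namespace PadicInt

variable {q : ℕ} [Fact q.Prime]

theorem norm_lt_one_iff_toZMod_eq_zero {x : ℤ_[q]} : ‖x‖ < 1 ↔ toZMod x = 0 := by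
  rw [← RingHom.mem_ker, ker_toZMod, IsLocalRing.mem_maximalIdeal, mem_nonunits]

theorem exists_pow_eq_of_toZMod_eq_pow {n : ℕ} (hn : ¬q ∣ n) {c : ℤ_[q]} {v : ZMod q}
    (hv : v ≠ 0) (hc : toZMod c = v ^ n) : ∃ w : ℤ_[q], w ^ n = c := by
  set a : ℤ_[q] := (v.val : ℤ_[q])
  have ha : toZMod a = v := by simp [a]
  have hval : ‖(X ^ n - C c).aeval a‖ < 1 := by
    rw [norm_lt_one_iff_toZMod_eq_zero]
    simp [ha, hc]
  have hder : ‖(X ^ n - C c).derivative.aeval a‖ = 1 := by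
    refine le_antisymm (norm_le_one _) (not_lt.mp ?_)
    rw [norm_lt_one_iff_toZMod_eq_zero]
    simp [derivative_X_pow, ha, hv, ZMod.natCast_eq_zero_iff, hn]
  obtain ⟨w, hw, -⟩ := hensels_lemma (F := X ^ n - C c) (a := a) (by rwa [hder, one_pow])
  exact ⟨w, by simpa [sub_eq_zero] using hw⟩

theorem isSquare_of_isSquare_toZMod (hq : q ≠ 2) {c : ℤ_[q]} (hc0 : toZMod c ≠ 0)
    (hc : IsSquare (toZMod c)) : IsSquare c := by
  obtain ⟨v, hv⟩ := hc
  have hv0 : v ≠ 0 := by rintro rfl; exact hc0 (by simpa using hv)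
  have h2 : ¬q ∣ 2 := fun h => hq ((Nat.prime_dvd_prime_iff_eq Fact.out Nat.prime_two).mp h)
  obtain ⟨w, hw⟩ := exists_pow_eq_of_toZMod_eq_pow h2 hv0 (by rw [hv, sq])
  exact ⟨w, by rw [← hw, sq]⟩

theorem isSquare_or_isSquare_or_isSquare_mul (hq : q ≠ 2) {a b : ℤ_[q]} (ha : toZMod a ≠ 0)
    (hb : toZMod b ≠ 0) : IsSquare a ∨ IsSquare b ∨ IsSquare (a * b) := by
  by_contra! h
  refine h.2.2 (isSquare_of_isSquare_toZMod hq (by simp [ha, hb]) ?_)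
  rw [map_mul]
  exact FiniteField.isSquare_mul_of_not_isSquare
    (mt (isSquare_of_isSquare_toZMod hq ha) h.1) (mt (isSquare_of_isSquare_toZMod hq hb) h.2.1)

theorem isSquare_of_eight_dvd_sub_one {c : ℤ_[2]} (hc : 8 ∣ c - 1) : IsSquare c := by
  have hval : ‖(X ^ 2 - C c).aeval (1 : ℤ_[2])‖ ≤ ((2 : ℕ) : ℝ) ^ (-(3 : ℕ) : ℤ) := by
    rw [norm_le_pow_iff_mem_span_pow, Ideal.mem_span_singleton]
    norm_num [dvd_sub_comm, hc]
  have hder : ‖(X ^ 2 - C c).derivative.aeval (1 : ℤ_[2])‖ = 2⁻¹ := by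
    simpa [one_add_one_eq_two] using norm_p (p := 2)
  obtain ⟨w, hw, -⟩ :=
    hensels_lemma (F := X ^ 2 - C c) (a := 1) (hval.trans_lt (by rw [hder]; norm_num))
  exact ⟨w, by simpa [sub_eq_zero, sq, eq_comm] using hw⟩

theorem isSquare_coe {c : ℤ_[q]} (hc : IsSquare c) : IsSquare (c : ℚ_[q]) :=
  hc.map Coe.ringHom

end PadicInt

namespace HasNontrivialPoint

variable {K : Type*} [Field K] {p : ℕ}

theorem of_isSquare_two (h : IsSquare (2 : K)) : HasNontrivialPoint K p := by
  obtain ⟨w, hw⟩ := h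
  exact ⟨w, 0, 0, 1, by linear_combination -hw, by simp⟩

theorem of_isSquare_neg (h : IsSquare (-p : K)) : HasNontrivialPoint K p := by
  obtain ⟨w, hw⟩ := h
  exact ⟨w, 0, 1, 0, by linear_combination -hw, by simp⟩

theorem of_isSquare_neg_two_mul (h : IsSquare (-2 * p : K)) : HasNontrivialPoint K p := by
  obtain ⟨w, hw⟩ := h
  exact ⟨w, 1, 0, 0, by linear_combination -hw, by simp⟩

theorem of_isSquare_two_sub_three_mul (h : IsSquare (2 - 3 * p : K)) : HasNontrivialPoint K p := by
  obtain ⟨w, hw⟩ := h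
  exact ⟨w, 1, 1, 1, by linear_combination -hw, by simp⟩

theorem of_pow_four_eq (y : K) (hy : y ^ 4 = -(2 + p)) : HasNontrivialPoint K p :=
  ⟨p, 1, y, 0, by linear_combination (p : K) * hy, by simp⟩

end HasNontrivialPoint

theorem hasNontrivialPoint_real (p : ℕ) : HasNontrivialPoint ℝ p :=
  .of_isSquare_two ⟨√2, (Real.mul_self_sqrt zero_le_two).symm⟩

theorem hasNontrivialPoint_padic_two {p : ℕ} (hp : p % 8 = 3) : HasNontrivialPoint ℚ_[2] p := by
  obtain ⟨k, hk⟩ : (8 : ℤ) ∣ 2 - 3 * p - 1 := by omega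
  have hsq : IsSquare (2 - 3 * p : ℤ_[2]) :=
    isSquare_of_eight_dvd_sub_one ⟨k, by exact_mod_cast congrArg (Int.cast : ℤ → ℤ_[2]) hk⟩
  exact .of_isSquare_two_sub_three_mul (by exact_mod_cast isSquare_coe hsq)

theorem hasNontrivialPoint_padic_self {p : ℕ} [Fact p.Prime] (hp : p % 8 = 3) :
    HasNontrivialPoint ℚ_[p] p := by
  have h2 : ¬p ∣ 2 := fun h => by have := Nat.le_of_dvd two_pos h; omega
  obtain ⟨v, hv⟩ := ZMod.exists_pow_four_eq_neg_two hp
  have hv0 : v ≠ 0 := by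
    rintro rfl
    exact h2 ((ZMod.natCast_eq_zero_iff 2 p).mp (by simpa using hv.symm))
  obtain ⟨y, hy⟩ := exists_pow_eq_of_toZMod_eq_pow (c := -(2 + p))
    (fun h => h2 (Nat.Prime.dvd_of_dvd_pow (n := 2) Fact.out h)) hv0 (by simp [hv, map_ofNat])
  exact .of_pow_four_eq (y : ℚ_[p]) (by exact_mod_cast congrArg ((↑) : ℤ_[p] → ℚ_[p]) hy)

theorem hasNontrivialPoint_padic_of_not_dvd {q p : ℕ} [Fact q.Prime] (hq : q ≠ 2) (hqp : ¬q ∣ p) :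
    HasNontrivialPoint ℚ_[q] p := by
  have h2 : toZMod (2 : ℤ_[q]) ≠ 0 := by
    rw [map_ofNat]
    exact_mod_cast (ZMod.natCast_eq_zero_iff 2 q).not.mpr
      fun h => hq ((Nat.prime_dvd_prime_iff_eq Fact.out Nat.prime_two).mp h)
  have hp : toZMod (-p : ℤ_[q]) ≠ 0 := by simpa [ZMod.natCast_eq_zero_iff] using hqp
  rcases isSquare_or_isSquare_or_isSquare_mul hq h2 hp with h | h | h
  · exact .of_isSquare_two (by exact_mod_cast isSquare_coe h)
  · exact .of_isSquare_neg (by exact_mod_cast isSquare_coe h)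
  · exact .of_isSquare_neg_two_mul (by rw [← neg_mul_comm] at h; exact_mod_cast isSquare_coe h)

/-- For a prime `p ≡ 3 (mod 16)`, the surface `w² = −2p·x⁴ − p·y⁴ + 2·z⁴` has points
over every `q`-adic field `ℚ_q` and over `ℝ`, with `(x, y, z) ≠ (0, 0, 0)`. -/
theorem delPezzo_two_p_everywhere_locally_solvable (p : ℕ) (hp : p.Prime)
    (hmod : p % 16 = 3) :
    (∀ (q : ℕ) [Fact q.Prime],
      ∃ w x y z : ℚ_[q], w ^ 2 = -2 * p * x ^ 4 - p * y ^ 4 + 2 * z ^ 4 ∧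
        (x, y, z) ≠ (0, 0, 0)) ∧
    (∃ w x y z : ℝ, w ^ 2 = -2 * p * x ^ 4 - p * y ^ 4 + 2 * z ^ 4 ∧
      (x, y, z) ≠ (0, 0, 0)) := by
  have hp8 : p % 8 = 3 := by omega
  refine ⟨fun q _ => ?_, hasNontrivialPoint_real p⟩
  rcases eq_or_ne q 2 with rfl | hq2
  · exact hasNontrivialPoint_padic_two hp8
  by_cases hqp : q ∣ p
  · obtain rfl := (Nat.prime_dvd_prime_iff_eq Fact.out hp).mp hqp
    exact hasNontrivialPoint_padic_self hp8
  · exact hasNontrivialPoint_padic_of_not_dvd hq2 hqp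
end

section
/- Let M and N be positive integers with M ≡ 3 (mod 4) and N ≡ 3 (mod 4), and suppose that no prime q with q ≡ 3 (mod 4) divides both M and N. Then 2·M·N is not a sum of two squares of integers, i.e., there are no integers a, b with a² + b² = 2·M·N. -/
/-!
Since `M ≡ 3 (mod 4)` is not a sum of two squares, some prime `q ≡ 3 (mod 4)` divides `M` to an
odd power. By hypothesis `q ∤ N`, and `q ∤ 2`, so `q` also divides `2MN` to an odd power, which
rules out `2MN` being a sum of two squares.
-/

theorem Nat.sq_add_sq_mod_four_ne_three (x y : ℕ) : (x ^ 2 + y ^ 2) % 4 ≠ 3 := by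
  intro h
  have hmod : ((x ^ 2 + y ^ 2 : ℕ) : ZMod 4) = 3 := by
    rw [← ZMod.natCast_mod, h]
    rfl
  push_cast at hmod
  have hsq : ∀ u v : ZMod 4, u ^ 2 + v ^ 2 ≠ 3 := by decide
  exact hsq x y hmod

theorem Nat.exists_prime_mod_four_eq_three_odd_padicValNat {m : ℕ} (hm : m % 4 = 3) :
    ∃ q, q.Prime ∧ q % 4 = 3 ∧ Odd (padicValNat q m) := by
  by_contra! h
  obtain ⟨x, y, rfl⟩ : ∃ x y, m = x ^ 2 + y ^ 2 :=
    Nat.eq_sq_add_sq_iff.mpr fun q hq hq4 ↦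
      Nat.not_odd_iff_even.mp (h q (Nat.prime_of_mem_primeFactors hq) hq4)
  exact Nat.sq_add_sq_mod_four_ne_three x y hm

theorem Nat.not_exists_sq_add_sq_of_odd_padicValNat {n q : ℕ} (hq : q.Prime) (hq4 : q % 4 = 3)
    (hodd : Odd (padicValNat q n)) : ¬ ∃ x y, n = x ^ 2 + y ^ 2 := by
  intro hsq
  have hn : n ≠ 0 := by
    rintro rfl
    simp at hodd
  have hqn : q ∣ n := dvd_of_one_le_padicValNat hodd.pos
  exact Nat.not_even_iff_odd.mpr hodd <|
    Nat.eq_sq_add_sq_iff.mp hsq q (Nat.mem_primeFactors.mpr ⟨hq, hqn, hn⟩) hq4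

theorem padicValNat_mul_of_not_dvd {p m k : ℕ} [Fact p.Prime] (hm : m ≠ 0) (hk : ¬ p ∣ k) :
    padicValNat p (m * k) = padicValNat p m := by
  have hk0 : k ≠ 0 := by
    rintro rfl
    exact hk (dvd_zero p)
  rw [padicValNat.mul hm hk0, padicValNat.eq_zero_of_not_dvd hk, add_zero]

theorem two_mul_not_sum_of_two_squares_general (M N : ℤ) (hM : 0 < M) (hN : 0 < N)
    (hM4 : M % 4 = 3)
    (hcop : ∀ q : ℤ, Prime q → q % 4 = 3 → ¬(q ∣ M ∧ q ∣ N)) :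
    ¬ ∃ a b : ℤ, a ^ 2 + b ^ 2 = 2 * M * N := by
  rintro ⟨a, b, hab⟩
  lift M to ℕ using hM.le
  lift N to ℕ using hN.le
  obtain ⟨q, hq, hq4, hodd⟩ := Nat.exists_prime_mod_four_eq_three_odd_padicValNat (m := M) (by omega)
  have : Fact q.Prime := ⟨hq⟩
  have hqM : q ∣ M := dvd_of_one_le_padicValNat hodd.pos
  have hqN : ¬ q ∣ N := fun hqN ↦
    hcop q (Nat.prime_iff_prime_int.mp hq) (by omega) ⟨by exact_mod_cast hqM, by exact_mod_cast hqN⟩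
  have hq2 : ¬ q ∣ 2 := fun h ↦ by have := Nat.le_of_dvd two_pos h; omega
  have hval : padicValNat q (M * (2 * N)) = padicValNat q M :=
    padicValNat_mul_of_not_dvd (by omega) (hq.not_dvd_mul hq2 hqN)
  refine Nat.not_exists_sq_add_sq_of_odd_padicValNat hq hq4 (hval ▸ hodd) ⟨a.natAbs, b.natAbs, ?_⟩
  zify
  rw [sq_abs, sq_abs, hab]
  ring

/-- If `M ≡ N ≡ 3 (mod 4)` are positive integers with no common prime factor
congruent to `3 (mod 4)`, then `2·M·N` is not a sum of two squares. -/
theorem two_mul_not_sum_of_two_squares (M N : ℤ) (hM : 0 < M) (hN : 0 < N)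
    (hM4 : M % 4 = 3) (hN4 : N % 4 = 3)
    (hcop : ∀ q : ℤ, Prime q → q % 4 = 3 → ¬(q ∣ M ∧ q ∣ N)) :
    ¬ ∃ a b : ℤ, a ^ 2 + b ^ 2 = 2 * M * N :=
  two_mul_not_sum_of_two_squares_general M N hM hN hM4 hcop
end

section
/- Let p be a prime with p ≡ 3 (mod 16), and write p = u² + 2v² for positive integers u and v. Then the Legendre symbol satisfies (uv/p) = (−1)^((u−v)/2); that is, u·v is a quadratic residue modulo p if and only if (u − v)/2 is even. -/
private lemma neg_one_pow_congr' {m n : ℕ} (h : m % 2 = n % 2) : ((-1:ℤ))^m = (-1)^n := by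
  rcases Nat.even_or_odd m with hm | hm
  · have hm2 := Nat.even_iff.mp hm
    rw [hm.neg_one_pow, (Nat.even_iff.mpr (by omega) : Even n).neg_one_pow]
  · have hm2 := Nat.odd_iff.mp hm
    rw [hm.neg_one_pow, (Nat.odd_iff.mpr (by omega) : Odd n).neg_one_pow]

/-- For a prime `p ≡ 3 (mod 16)` with `p = u² + 2v²` (`u, v > 0`), the Legendre
symbol satisfies `(uv/p) = (−1)^((u−v)/2)`; that is, `u·v` is a quadratic residue
mod `p` iff `(u − v)/2` is even. -/
theorem legendreSym_uv_eq (p : ℕ) [Fact p.Prime] (hmod : p % 16 = 3)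
    (u v : ℤ) (hu : 0 < u) (hv : 0 < v) (hp2 : (p : ℤ) = u ^ 2 + 2 * v ^ 2) :
    legendreSym p (u * v) = (-1) ^ ((u - v) / 2).natAbs ∧
      (IsSquare ((u * v : ℤ) : ZMod p) ↔ 2 ∣ (u - v) / 2) := by
  have hp : p.Prime := Fact.out
  -- names for the natural number versions
  set a : ℕ := u.toNat with hadef
  set b : ℕ := v.toNat with hbdef
  have ha : (a : ℤ) = u := Int.toNat_of_nonneg hu.le
  have hb : (b : ℤ) = v := Int.toNat_of_nonneg hv.le
  have ha0 : 0 < a := by omega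
  have hb0 : 0 < b := by omega
  -- mod 16 analysis
  have hp16 : ((p : ZMod 16)) = 3 := by
    rw [show p = 16 * (p / 16) + 3 by omega]
    push_cast
    rw [show ((16 : ZMod 16)) = 0 from by decide]
    ring
  have h16 : ((u : ZMod 16))^2 + 2 * ((v : ZMod 16))^2 = 3 := by
    have := congrArg (fun z : ℤ => (z : ZMod 16)) hp2
    push_cast at this
    rw [← this, hp16]
  have key : ∀ x y : ZMod 16, x^2 + 2*y^2 = 3 →
      ((x = 1 ∨ x = 7 ∨ x = 9 ∨ x = 15) ∧ ∀ z, y ≠ 2 * z) := by decide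
  obtain ⟨hx, hy⟩ := key _ _ h16
  have hv2 : v % 2 = 1 := by
    rcases Int.even_or_odd v with ⟨w, hw⟩ | ⟨w, hw⟩
    · exact absurd (by rw [hw]; push_cast; ring) (hy (w : ZMod 16))
    · omega
  have hu16 : u % 16 = 1 ∨ u % 16 = 7 ∨ u % 16 = 9 ∨ u % 16 = 15 := by
    have d : ∀ c : ℤ, (u : ZMod 16) = ((c : ℤ) : ZMod 16) → (16:ℤ) ∣ u - c := by
      intro c hc
      apply (ZMod.intCast_zmod_eq_zero_iff_dvd _ 16).mp
      push_cast
      rw [hc]; ring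
    rcases hx with h|h|h|h
    · have := d 1 (by rw [h]; norm_num); omega
    · have := d 7 (by rw [h]; norm_num); omega
    · have := d 9 (by rw [h]; norm_num); omega
    · have := d 15 (by rw [h]; norm_num); omega
  have ha8 : a % 8 = 1 ∨ a % 8 = 7 := by omega
  have ha2 : a % 2 = 1 := by omega
  have hb2 : b % 2 = 1 := by omega
  have hao : Odd a := Nat.odd_iff.mpr ha2
  have hbo : Odd b := Nat.odd_iff.mpr hb2
  have hpo : Odd p := Nat.odd_iff.mpr (by omega)
  -- sizes
  have hpn : p = a ^ 2 + 2 * b ^ 2 := by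
    have : ((a ^ 2 + 2 * b ^ 2 : ℕ) : ℤ) = (p : ℤ) := by push_cast [ha, hb]; omega
    exact_mod_cast this.symm
  have hale : a ≤ a ^ 2 := Nat.le_self_pow two_ne_zero a
  have hble : b ≤ b ^ 2 := Nat.le_self_pow two_ne_zero b
  have hap : a < p := by nlinarith
  have hbp : b < p := by nlinarith
  -- coprimality
  have hcop : Nat.Coprime a b := by
    by_contra hco
    obtain ⟨q, hq, hqd⟩ := Nat.exists_prime_and_dvd hco
    have hqa : q ∣ a := hqd.trans (Nat.gcd_dvd_left a b)
    have hqb : q ∣ b := hqd.trans (Nat.gcd_dvd_right a b)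
    have hqp : q ∣ p := by
      rw [hpn]
      exact Nat.dvd_add (hqa.pow two_ne_zero) (Dvd.dvd.mul_left (hqb.pow two_ne_zero) 2)
    have := (Nat.Prime.eq_one_or_self_of_dvd hp q hqp).resolve_left hq.ne_one
    have := Nat.le_of_dvd ha0 hqa
    omega
  -- J(p | a) = 1
  have hJpa : jacobiSym (p : ℤ) a = 1 := by
    have hmd : ((p : ℤ)) % (a : ℕ) = (2 * v ^ 2) % (a : ℕ) := by
      have hdvd : ((a : ℕ) : ℤ) ∣ (p : ℤ) - 2 * v ^ 2 := ⟨a, by rw [hp2, ← ha]; ring⟩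
      exact Int.ModEq.symm (Int.modEq_iff_dvd.mpr hdvd)
    rw [jacobiSym.mod_left' hmd, jacobiSym.mul_left, jacobiSym.sq_one'
      (by rw [← hb, Int.gcd_natCast_natCast]; exact Nat.coprime_comm.mp hcop),
      jacobiSym.at_two hao, ZMod.χ₈_nat_eq_if_mod_eight]
    rcases ha8 with h|h <;> simp [h, ha2]
  -- J(p | b) = 1
  have hJpb : jacobiSym (p : ℤ) b = 1 := by
    have hmd : ((p : ℤ)) % (b : ℕ) = (u ^ 2) % (b : ℕ) := by
      have hdvd : ((b : ℕ) : ℤ) ∣ (p : ℤ) - u ^ 2 := ⟨2*b, by rw [hp2, ← hb]; ring⟩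
      exact Int.ModEq.symm (Int.modEq_iff_dvd.mpr hdvd)
    rw [jacobiSym.mod_left' hmd, jacobiSym.sq_one'
      (by rw [← ha, Int.gcd_natCast_natCast]; exact hcop)]
  -- reciprocity
  have Ju : jacobiSym u p = (-1) ^ (a / 2 * (p / 2)) := by
    rw [← ha, jacobiSym.quadratic_reciprocity hao hpo, hJpa, mul_one]
  have Jv : jacobiSym v p = (-1) ^ (b / 2 * (p / 2)) := by
    rw [← hb, jacobiSym.quadratic_reciprocity hbo hpo, hJpb, mul_one]
  have main : legendreSym p (u * v) = (-1) ^ ((u - v) / 2).natAbs := by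
    rw [jacobiSym.legendreSym.to_jacobiSym _, jacobiSym.mul_left, Ju, Jv, ← pow_add, ← add_mul, pow_mul]
    have hk : (p / 2) % 2 = 1 := by omega
    rcases Nat.even_or_odd (a / 2 + b / 2) with hs | hs
    · have hs2 := Nat.even_iff.mp hs
      rw [hs.neg_one_pow, one_pow,
        ((Nat.even_iff.mpr (by omega)) : Even ((u - v) / 2).natAbs).neg_one_pow]
    · have hs2 := Nat.odd_iff.mp hs
      rw [hs.neg_one_pow, (Nat.odd_iff.mpr hk : Odd (p / 2)).neg_one_pow,
        ((Nat.odd_iff.mpr (by omega)) : Odd ((u - v) / 2).natAbs).neg_one_pow]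
  refine ⟨main, ?_⟩
  have hne : (((u * v : ℤ)) : ZMod p) ≠ 0 := by
    rw [Ne, ZMod.intCast_zmod_eq_zero_iff_dvd]
    intro hdvd
    have hpint : Prime (p : ℤ) := Int.prime_iff_natAbs_prime.mpr (by simpa using hp)
    rcases hpint.2.2 u v hdvd with h | h
    · rw [← ha, Int.natCast_dvd_natCast] at h
      have := Nat.le_of_dvd ha0 h; omega
    · rw [← hb, Int.natCast_dvd_natCast] at h
      have := Nat.le_of_dvd hb0 h; omega
  rw [← legendreSym.eq_one_iff p hne, main]
  rw [neg_one_pow_eq_one_iff_even (by norm_num : (-1:ℤ) ≠ 1), Nat.even_iff]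
  omega
end

section
/- Let p be a prime with p ≡ 3 (mod 16), write p = u² + 2v² with u, v positive integers, and set s = (−1)^((u−v)/2). Then for all real numbers w, x, y, z with w² = −2p·x⁴ − p·y⁴ + 2·z⁴ and (x, y, z) ≠ (0, 0, 0), one has −s·u·x² − v·y² + z² ≥ 0. -/
/-- Claim (i) of Example 7.1: for a prime `p ≡ 3 (mod 16)` with `p = u² + 2v²` and
`s = (−1)^((u−v)/2)`, at every real point of `w² = −2p·x⁴ − p·y⁴ + 2·z⁴` one has
`−s·u·x² − v·y² + z² ≥ 0`. -/
theorem unramified_at_real_points (p : ℕ) (hp : p.Prime) (hmod : p % 16 = 3)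
    (u v : ℤ) (hu : 0 < u) (hv : 0 < v) (hp2 : (p : ℤ) = u ^ 2 + 2 * v ^ 2)
    (s : ℤ) (hs : s = (-1) ^ ((u - v) / 2).natAbs)
    (w x y z : ℝ)
    (heq : w ^ 2 = -2 * (p : ℝ) * x ^ 4 - (p : ℝ) * y ^ 4 + 2 * z ^ 4)
    (hnz : (x, y, z) ≠ (0, 0, 0)) :
    0 ≤ -(s : ℝ) * (u : ℝ) * x ^ 2 - (v : ℝ) * y ^ 2 + z ^ 2 := by
  have hn : s = 1 ∨ s = -1 := by
    rcases Nat.even_or_odd ((u - v) / 2).natAbs with h | h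
    · left; rw [hs, h.neg_one_pow]
    · right; rw [hs, h.neg_one_pow]
  have hu' : (0 : ℝ) < (u : ℝ) := by exact_mod_cast hu
  have hv' : (0 : ℝ) < (v : ℝ) := by exact_mod_cast hv
  have hpr : (p : ℝ) = (u : ℝ) ^ 2 + 2 * (v : ℝ) ^ 2 := by exact_mod_cast hp2
  rw [hpr] at heq
  have h4 : ((u : ℝ) * x ^ 2 + (v : ℝ) * y ^ 2) ^ 2 ≤ (z ^ 2) ^ 2 := by
    nlinarith [sq_nonneg w, sq_nonneg (2 * (v : ℝ) * x ^ 2 - (u : ℝ) * y ^ 2)]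
  have ha : 0 ≤ (u : ℝ) * x ^ 2 + (v : ℝ) * y ^ 2 := by positivity
  have key : (u : ℝ) * x ^ 2 + (v : ℝ) * y ^ 2 ≤ z ^ 2 := by
    nlinarith [h4, ha, sq_nonneg z]
  rcases hn with h | h <;> subst h <;> push_cast <;>
    nlinarith [sq_nonneg x, sq_nonneg y, mul_pos hu' hv']
end

section
/- Let p be a prime with p ≡ 3 (mod 16), write p = u² + 2v² with u, v positive integers, and set s = (−1)^((u−v)/2). Then for all p-adic integers w, x, y, z ∈ ℤ_p satisfying w² = −2p·x⁴ − p·y⁴ + 2·z⁴, such that not all of w, x, y, z are divisible by p, the element −s·u·x² − v·y² + z² is a unit in ℤ_p (i.e., is not divisible by p). -/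
/-!
Reducing modulo `p`, the equation gives `w² ≡ 2z⁴`; since `p ≡ 3 (mod 8)`, `2` is not a square
mod `p`, so `p ∣ z` and `p ∣ w`. Dividing the equation by `p` then gives `2x⁴ + y⁴ ≡ 0`, and
primitivity forces `x ≢ 0 (mod p)`. If `p` divided `−s·u·x² − v·y² + z²`, then
`v·y² ≡ −s·u·x²` would make `−s·u·v` a square mod `p`. But quadratic reciprocity, with
`u ≡ ±1 (mod 8)` and `v` odd (read off from `u² + 2v² ≡ 3 (mod 16)`), gives
`(u/p) = (−1)^⌊u/2⌋`, `(v/p) = (−1)^⌊v/2⌋` and `(−1/p) = −1`, whence `(−s·u·v / p) = −1`.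
-/

open scoped NumberTheorySymbols

lemma Nat.coprime_of_squarefree_sq_add_mul_sq {u v k : ℕ} (h : Squarefree (u ^ 2 + k * v ^ 2)) :
    u.Coprime v := by
  have hdvd : u.gcd v * u.gcd v ∣ u ^ 2 + k * v ^ 2 := by
    rw [← sq]
    exact dvd_add (pow_dvd_pow_of_dvd (Nat.gcd_dvd_left u v) 2)
      (Dvd.dvd.mul_left (pow_dvd_pow_of_dvd (Nat.gcd_dvd_right u v) 2) k)
  exact Nat.isUnit_iff.mp (h _ hdvd)

lemma mod_eight_of_sq_add_two_mul_sq_mod_sixteen {u v : ℕ} (h : (u ^ 2 + 2 * v ^ 2) % 16 = 3) :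
    (u % 8 = 1 ∨ u % 8 = 7) ∧ v % 2 = 1 := by
  rw [Nat.add_mod, Nat.pow_mod, Nat.mul_mod, Nat.pow_mod v] at h
  have hu := Nat.mod_lt u (show 16 > 0 by norm_num)
  have hv := Nat.mod_lt v (show 16 > 0 by norm_num)
  have hu8 : u % 8 = u % 16 % 8 := (Nat.mod_mod_of_dvd u (by norm_num)).symm
  have hv2 : v % 2 = v % 16 % 2 := (Nat.mod_mod_of_dvd v (by norm_num)).symm
  rw [hu8, hv2]
  interval_cases u % 16 <;> interval_cases v % 16 <;> simp_all

lemma jacobiSym_eq_neg_one_pow_mul_of_mod_four_eq_three {a p : ℕ} (ha : Odd a) (hp : p % 4 = 3) :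
    J(a | p) = (-1) ^ (a / 2) * J(p | a) := by
  have hp' : Odd p := Nat.odd_iff.mpr (by omega)
  rw [jacobiSym.quadratic_reciprocity ha hp', mul_comm (a / 2), pow_mul,
    ZMod.neg_one_pow_div_two_of_three_mod_four hp]

lemma jacobiSym_left_eq_neg_one_pow {p u v : ℕ} (hp : p = u ^ 2 + 2 * v ^ 2)
    (hp16 : p % 16 = 3) (hsf : Squarefree p) :
    J(u | p) = (-1) ^ (u / 2) := by
  obtain ⟨hu8, -⟩ := mod_eight_of_sq_add_two_mul_sq_mod_sixteen (hp ▸ hp16)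
  have hu : Odd u := Nat.odd_iff.mpr (by omega)
  have hcop : Int.gcd v u = 1 := by
    rw [Int.gcd_natCast_natCast]
    exact (Nat.coprime_of_squarefree_sq_add_mul_sq (hp ▸ hsf)).symm
  have hpu : J(p | u) = J(2 * v ^ 2 | u) :=
    jacobiSym.mod_left' (by push_cast [hp]; rw [add_comm, sq (u : ℤ), Int.add_mul_emod_self_right])
  rw [jacobiSym_eq_neg_one_pow_mul_of_mod_four_eq_three hu (by omega), hpu,
    jacobiSym.mul_left, jacobiSym.sq_one' hcop, jacobiSym.at_two hu, ZMod.χ₈_nat_eq_if_mod_eight,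
    if_neg (by omega), if_pos hu8, mul_one, mul_one]

lemma jacobiSym_right_eq_neg_one_pow {p u v : ℕ} (hp : p = u ^ 2 + 2 * v ^ 2)
    (hp16 : p % 16 = 3) (hsf : Squarefree p) :
    J(v | p) = (-1) ^ (v / 2) := by
  obtain ⟨-, hv2⟩ := mod_eight_of_sq_add_two_mul_sq_mod_sixteen (hp ▸ hp16)
  have hv : Odd v := Nat.odd_iff.mpr hv2
  have hcop : Int.gcd u v = 1 := by
    rw [Int.gcd_natCast_natCast]
    exact Nat.coprime_of_squarefree_sq_add_mul_sq (hp ▸ hsf)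
  have hpv : J(p | v) = J(u ^ 2 | v) := by
    refine jacobiSym.mod_left' ?_
    push_cast [hp]
    rw [show (2 : ℤ) * v ^ 2 = v * (2 * v) by ring, Int.add_mul_emod_self_left]
  rw [jacobiSym_eq_neg_one_pow_mul_of_mod_four_eq_three hv (by omega), hpv,
    jacobiSym.sq_one' hcop, mul_one]

lemma jacobiSym_neg_sign_mul_eq_neg_one {p u v : ℕ} (hp : p = u ^ 2 + 2 * v ^ 2)
    (hp16 : p % 16 = 3) (hsf : Squarefree p) :
    J(-(-1) ^ (((u : ℤ) - v) / 2).natAbs * u * v | p) = -1 := by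
  obtain ⟨hu8, hv2⟩ := mod_eight_of_sq_add_two_mul_sq_mod_sixteen (hp ▸ hp16)
  have hneg : J(-1 | p) = -1 := by
    rw [jacobiSym.at_neg_one (Nat.odd_iff.mpr (by omega)), ZMod.χ₄_nat_eq_if_mod_four,
      if_neg (by omega), if_neg (by omega)]
  rw [show -(-1 : ℤ) ^ (((u : ℤ) - v) / 2).natAbs * u * v
      = (-1) ^ ((((u : ℤ) - v) / 2).natAbs + 1) * (u * v) by ring,
    jacobiSym.mul_left, jacobiSym.pow_left, jacobiSym.mul_left,
    jacobiSym_left_eq_neg_one_pow hp hp16 hsf, jacobiSym_right_eq_neg_one_pow hp hp16 hsf, hneg,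
    ← pow_add, ← pow_add, neg_one_pow_eq_pow_mod_two,
    show ((((u : ℤ) - v) / 2).natAbs + 1 + (u / 2 + v / 2)) % 2 = 1 by omega, pow_one]

lemma eq_zero_of_sq_eq_two_mul_pow_four {F : Type*} [Field F] (h2 : ¬IsSquare (2 : F))
    {w z : F} (h : w ^ 2 = 2 * z ^ 4) : w = 0 ∧ z = 0 := by
  have hz : z = 0 := by
    by_contra hz
    refine h2 ⟨w / z ^ 2, ?_⟩
    field_simp
    linear_combination -h
  subst hz
  exact ⟨pow_eq_zero_iff two_ne_zero |>.mp (by simpa using h), rfl⟩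

lemma isSquare_mul_of_mul_sq_eq_mul_sq {F : Type*} [Field F] {a b x y : F} (hx : x ≠ 0)
    (h : b * y ^ 2 = a * x ^ 2) : IsSquare (a * b) :=
  ⟨b * y / x, by field_simp; linear_combination (-b) * h⟩

lemma dvd_two_mul_pow_four_add_pow_four {R : Type*} [CommRing R] [IsDomain R] {π w x y z : R}
    (hπ : π ≠ 0) (h : w ^ 2 = -2 * π * x ^ 4 - π * y ^ 4 + 2 * z ^ 4) (hw : π ∣ w) (hz : π ∣ z) :
    π ∣ 2 * x ^ 4 + y ^ 4 := by
  obtain ⟨a, rfl⟩ := hw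
  obtain ⟨c, rfl⟩ := hz
  exact ⟨2 * π ^ 2 * c ^ 4 - a ^ 2, mul_left_cancel₀ hπ (by linear_combination h)⟩

namespace PadicInt

variable {p : ℕ} [Fact p.Prime]

lemma toZMod_eq_zero_iff_dvd (x : ℤ_[p]) : toZMod x = 0 ↔ (p : ℤ_[p]) ∣ x := by
  rw [← RingHom.mem_ker, ker_toZMod, maximalIdeal_eq_span_p, Ideal.mem_span_singleton]

lemma isUnit_iff_toZMod_ne_zero (x : ℤ_[p]) : IsUnit x ↔ toZMod x ≠ 0 := by
  rw [Ne, ← RingHom.mem_ker, ker_toZMod, IsLocalRing.mem_maximalIdeal, mem_nonunits_iff, not_not]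

end PadicInt

/-- Claim (iii) of Example 7.1: for a prime `p ≡ 3 (mod 16)` with `p = u² + 2v²` and
`s = (−1)^((u−v)/2)`, at every primitive `p`-adic integral point of
`w² = −2p·x⁴ − p·y⁴ + 2·z⁴` the element `−s·u·x² − v·y² + z²` is a unit in `ℤ_p`. -/
theorem unramified_at_p_adic_points (p : ℕ) [Fact p.Prime] (hmod : p % 16 = 3)
    (u v : ℤ) (hu : 0 < u) (hv : 0 < v) (hp2 : (p : ℤ) = u ^ 2 + 2 * v ^ 2)
    (s : ℤ) (hs : s = (-1) ^ ((u - v) / 2).natAbs)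
    (w x y z : ℤ_[p])
    (heq : w ^ 2 = -2 * (p : ℤ_[p]) * x ^ 4 - (p : ℤ_[p]) * y ^ 4 + 2 * z ^ 4)
    (hnz : ¬((p : ℤ_[p]) ∣ w ∧ (p : ℤ_[p]) ∣ x ∧ (p : ℤ_[p]) ∣ y ∧ (p : ℤ_[p]) ∣ z)) :
    IsUnit (-(s : ℤ_[p]) * (u : ℤ_[p]) * x ^ 2 - (v : ℤ_[p]) * y ^ 2 + z ^ 2) := by
  have hp : p.Prime := Fact.out
  lift u to ℕ using hu.le
  lift v to ℕ using hv.le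
  have hJ := jacobiSym_neg_sign_mul_eq_neg_one (by exact_mod_cast hp2) hmod hp.prime.squarefree
  have h2 : ¬IsSquare (2 : ZMod p) := by rw [ZMod.exists_sq_eq_two_iff (by omega)]; omega
  obtain ⟨hw, hz⟩ := eq_zero_of_sq_eq_two_mul_pow_four h2 (w := PadicInt.toZMod w)
    (z := PadicInt.toZMod z) (by simpa [map_ofNat] using congrArg PadicInt.toZMod heq)
  have hxy := dvd_two_mul_pow_four_add_pow_four (Nat.cast_ne_zero.mpr hp.ne_zero) heq
    ((PadicInt.toZMod_eq_zero_iff_dvd w).mp hw) ((PadicInt.toZMod_eq_zero_iff_dvd z).mp hz)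
  simp only [← PadicInt.toZMod_eq_zero_iff_dvd] at hxy hnz
  have hx : PadicInt.toZMod x ≠ 0 := by
    intro hx
    simp only [map_add, map_mul, map_pow, hx] at hxy
    exact hnz ⟨hw, hx, pow_eq_zero_iff (n := 4) (by norm_num) |>.mp (by simpa using hxy), hz⟩
  rw [PadicInt.isUnit_iff_toZMod_ne_zero, hs]
  intro hα
  simp only [map_add, map_sub, map_mul, map_pow, map_neg, map_intCast, hz] at hα
  push_cast at hα
  refine ZMod.nonsquare_of_jacobiSym_eq_neg_one hJ ?_
  push_cast
  exact isSquare_mul_of_mul_sq_eq_mul_sq hx (y := PadicInt.toZMod y) (by linear_combination -hα)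
end

section
/- The equation w² = −25·x⁴ − 5·y⁴ + 45·z⁴ has no solution (w, x, y, z) ∈ ℚ⁴ with (x, y, z) ≠ (0, 0, 0). -/
/-!
Clearing denominators and dividing out common prime factors turns a rational point into an
integral solution in which no prime divides all of `x`, `y`, `z`. Modulo 16 such a solution has
`y` even and `z` odd, and modulo 3 (where `-1` is not a square) `3 ∤ y`, so
`Q = 3z² + y² ≡ 3 mod 4`. On the other hand `w² + (5x²)² = 5(3z² - y²)Q`, and a prime `q ≡ 3 mod 4`
dividing both `Q` and `5(3z² - y²)` would divide `y`, `z` and then `x`. Hence at every prime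
`q ≡ 3 mod 4` the valuation of `Q` is that of a sum of two squares, which is even, so `Q` is
itself a sum of two squares: impossible modulo 4.
-/

def IsPrimitiveTriple (x y z : ℤ) : Prop :=
  ∀ p : ℕ, p.Prime → (p : ℤ) ∣ x → (p : ℤ) ∣ y → ¬(p : ℤ) ∣ z

theorem Int.dvd_right_of_dvd_sq_add_sq {p : ℕ} [Fact p.Prime] (hp : p % 4 = 3) {a b : ℤ}
    (h : (p : ℤ) ∣ a ^ 2 + b ^ 2) : (p : ℤ) ∣ b := by
  by_contra hb
  rw [← ZMod.intCast_zmod_eq_zero_iff_dvd] at h hb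
  push_cast at h
  exact ZMod.mod_four_ne_three_of_sq_eq_neg_sq' hb (eq_neg_of_add_eq_zero_left h) hp

theorem Int.exists_sq_add_sq_of_mul_eq_sq_add_sq {m n a b : ℤ} (h : m * n = a ^ 2 + b ^ 2)
    (hn : 0 ≤ n) (hmn : ∀ q : ℕ, q.Prime → q % 4 = 3 → (q : ℤ) ∣ n → ¬(q : ℤ) ∣ m) :
    ∃ s t : ℤ, n = s ^ 2 + t ^ 2 := by
  have hnat : m.natAbs * n.natAbs = a.natAbs ^ 2 + b.natAbs ^ 2 := by
    rw [← Int.natAbs_mul, h, Int.natAbs_add_of_nonneg (sq_nonneg a) (sq_nonneg b),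
      Int.natAbs_pow, Int.natAbs_pow]
  obtain ⟨s, t, hst⟩ : ∃ s t, n.natAbs = s ^ 2 + t ^ 2 := by
    refine Nat.eq_sq_add_sq_iff.mpr fun q hq hq4 ↦ ?_
    obtain ⟨hqp, hqn, hn0⟩ := Nat.mem_primeFactors.mp hq
    have : Fact q.Prime := ⟨hqp⟩
    have hqm : ¬q ∣ m.natAbs := by
      rw [← Int.natCast_dvd]
      exact hmn q hqp hq4 (Int.natCast_dvd.mpr hqn)
    have hm0 : m.natAbs ≠ 0 := fun h0 ↦ hqm (h0 ▸ dvd_zero q)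
    have heven := Nat.eq_sq_add_sq_iff.mp ⟨_, _, hnat⟩ q
      (Nat.mem_primeFactors.mpr ⟨hqp, hqn.mul_left _, mul_ne_zero hm0 hn0⟩) hq4
    rwa [padicValNat.mul hm0 hn0, padicValNat.eq_zero_of_not_dvd hqm, zero_add] at heven
  exact ⟨s, t, by rw [← Int.natAbs_of_nonneg hn, hst]; push_cast; ring⟩

theorem Rat.exists_intCast_eq_mul_of_den_dvd (q : ℚ) {d : ℤ} (h : (q.den : ℤ) ∣ d) :
    ∃ m : ℤ, (m : ℚ) = q * d := by
  obtain ⟨k, rfl⟩ := h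
  exact ⟨q.num * k, by push_cast; rw [← Rat.mul_den_eq_num]; ring⟩

section QuarticSolutions

variable {A B C : ℤ}

theorem exists_int_solution_of_rat {w x y z : ℚ} (h : w ^ 2 = A * x ^ 4 + B * y ^ 4 + C * z ^ 4)
    (hne : (x, y, z) ≠ (0, 0, 0)) :
    ∃ W X Y Z : ℤ, W ^ 2 = A * X ^ 4 + B * Y ^ 4 + C * Z ^ 4 ∧ (X, Y, Z) ≠ (0, 0, 0) := by
  set d : ℤ := x.den * y.den * z.den
  have hd : (d : ℚ) ≠ 0 := by positivity
  obtain ⟨X, hX⟩ := Rat.exists_intCast_eq_mul_of_den_dvd x (d := d) ⟨y.den * z.den, by ring⟩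
  obtain ⟨Y, hY⟩ := Rat.exists_intCast_eq_mul_of_den_dvd y (d := d) ⟨x.den * z.den, by ring⟩
  obtain ⟨Z, hZ⟩ := Rat.exists_intCast_eq_mul_of_den_dvd z (d := d) ⟨x.den * y.den, by ring⟩
  have hsq : (w * d ^ 2) ^ 2 = ((A * X ^ 4 + B * Y ^ 4 + C * Z ^ 4 : ℤ) : ℚ) := by
    push_cast
    rw [hX, hY, hZ]
    linear_combination (d : ℚ) ^ 4 * h
  obtain ⟨W, hW⟩ := Rat.isSquare_intCast_iff.mp ⟨w * d ^ 2, hsq.symm.trans (sq _)⟩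
  refine ⟨W, X, Y, Z, hW.trans (sq W).symm |>.symm, ?_⟩
  contrapose! hne
  simp only [Prod.mk.injEq] at hne ⊢
  obtain ⟨rfl, rfl, rfl⟩ := hne
  simp_all

theorem exists_solution_of_mul {p w x y z : ℤ} (hp : p ≠ 0)
    (h : w ^ 2 = A * (p * x) ^ 4 + B * (p * y) ^ 4 + C * (p * z) ^ 4) :
    ∃ w' : ℤ, w' ^ 2 = A * x ^ 4 + B * y ^ 4 + C * z ^ 4 := by
  have hdvd : p ^ 2 ∣ w := by
    rw [← Int.pow_dvd_pow_iff two_ne_zero, h]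
    exact ⟨A * x ^ 4 + B * y ^ 4 + C * z ^ 4, by ring⟩
  obtain ⟨w', rfl⟩ := hdvd
  exact ⟨w', mul_left_cancel₀ (pow_ne_zero 4 hp) (by linear_combination h)⟩

theorem exists_primitive_solution {w x y z : ℤ} (h : w ^ 2 = A * x ^ 4 + B * y ^ 4 + C * z ^ 4)
    (hne : (x, y, z) ≠ (0, 0, 0)) :
    ∃ W X Y Z : ℤ, W ^ 2 = A * X ^ 4 + B * Y ^ 4 + C * Z ^ 4 ∧ IsPrimitiveTriple X Y Z := by
  induction hn : x.natAbs + y.natAbs + z.natAbs using Nat.strong_induction_on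
    generalizing w x y z with
  | _ n ih =>
  by_cases hprim : IsPrimitiveTriple x y z
  · exact ⟨w, x, y, z, h, hprim⟩
  simp only [IsPrimitiveTriple, not_forall, not_not] at hprim
  obtain ⟨p, hp, ⟨x, rfl⟩, ⟨y, rfl⟩, ⟨z, rfl⟩⟩ := hprim
  obtain ⟨w', h'⟩ := exists_solution_of_mul (by exact_mod_cast hp.ne_zero) h
  have hne' : (x, y, z) ≠ (0, 0, 0) := by
    contrapose! hne
    simp_all
  have hpos : 0 < x.natAbs + y.natAbs + z.natAbs := by
    contrapose! hne'
    simp_all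
  refine ih _ ?_ h' hne' rfl
  rw [← hn]
  simp only [Int.natAbs_mul, Int.natAbs_natCast]
  nlinarith [hp.two_le]

end QuarticSolutions

theorem intCast_pow_four_zmod_sixteen (a : ℤ) : (a : ZMod 16) ^ 4 = if Even a then 0 else 1 := by
  obtain ⟨k, rfl | rfl⟩ := Int.even_or_odd' a
  · rw [if_pos (even_two_mul k)]
    push_cast
    generalize (k : ZMod 16) = k
    revert k
    decide
  · rw [if_neg (Int.not_even_two_mul_add_one k)]
    push_cast
    generalize (k : ZMod 16) = k
    revert k
    decide

theorem even_and_odd_of_isPrimitiveTriple {w x y z : ℤ} (hprim : IsPrimitiveTriple x y z)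
    (h : w ^ 2 = -25 * x ^ 4 - 5 * y ^ 4 + 45 * z ^ 4) : Even y ∧ Odd z := by
  have hsq : ∀ v : ZMod 16, v ^ 2 ∈ ({0, 1, 4, 9} : Finset (ZMod 16)) := by decide
  have h16 := hsq w
  rw [← Int.cast_pow, h] at h16
  push_cast [intCast_pow_four_zmod_sixteen] at h16
  -- Of the eight parity patterns of `(x, y, z)`, only `x, z` odd and `y` even gives a square
  -- modulo 16; the all-even one is excluded by primitivity.
  split_ifs at h16
  all_goals first
    | exact absurd h16 (by decide)
    | exact ⟨‹Even y›, Int.not_even_iff_odd.mp ‹¬Even z›⟩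
    | exact (hprim 2 Nat.prime_two (even_iff_two_dvd.mp ‹Even x›) (even_iff_two_dvd.mp ‹Even y›)
        (even_iff_two_dvd.mp ‹Even z›)).elim

theorem not_three_dvd_of_isPrimitiveTriple {w x y z : ℤ} (hprim : IsPrimitiveTriple x y z)
    (h : w ^ 2 = -25 * x ^ 4 - 5 * y ^ 4 + 45 * z ^ 4) : ¬(3 : ℤ) ∣ y := by
  rintro ⟨y, rfl⟩
  have h3 : ((3 : ℕ) : ℤ) ∣ w ^ 2 + (5 * x ^ 2) ^ 2 :=
    ⟨15 * z ^ 4 - 135 * y ^ 4, by linear_combination h⟩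
  have hw : (3 : ℤ) ∣ w :=
    Int.dvd_right_of_dvd_sq_add_sq (a := 5 * x ^ 2) rfl (by rwa [add_comm] at h3)
  have hx : (3 : ℤ) ∣ x := Int.prime_three.dvd_of_dvd_pow <|
    (Int.prime_three.dvd_or_dvd (Int.dvd_right_of_dvd_sq_add_sq rfl h3)).resolve_left (by norm_num)
  obtain ⟨w, rfl⟩ := hw
  obtain ⟨x, rfl⟩ := hx
  have h3' : ((3 : ℕ) : ℤ) ∣ w ^ 2 + (z ^ 2) ^ 2 :=
    ⟨2 * z ^ 4 - 15 * y ^ 4 - 75 * x ^ 4,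
      mul_left_cancel₀ (by norm_num : (9 : ℤ) ≠ 0) (by linear_combination h)⟩
  have hz : (3 : ℤ) ∣ z := Int.prime_three.dvd_of_dvd_pow (Int.dvd_right_of_dvd_sq_add_sq rfl h3')
  exact hprim 3 Nat.prime_three ⟨x, rfl⟩ ⟨y, rfl⟩ hz

theorem three_mul_sq_add_sq_ne_sq_add_sq {y z s t : ℤ} (hy : Even y) (hz : Odd z) :
    3 * z ^ 2 + y ^ 2 ≠ s ^ 2 + t ^ 2 := by
  obtain ⟨m, rfl⟩ := hy
  obtain ⟨k, rfl⟩ := hz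
  intro h
  have h4 := congrArg (Int.cast : ℤ → ZMod 4) h
  push_cast at h4
  generalize (m : ZMod 4) = m, (k : ZMod 4) = k, (s : ZMod 4) = s, (t : ZMod 4) = t at h4
  revert m k s t
  decide

theorem not_dvd_of_dvd_three_mul_sq_add_sq {q : ℕ} {w x y z : ℤ}
    (hprim : IsPrimitiveTriple x y z)
    (h : w ^ 2 = -25 * x ^ 4 - 5 * y ^ 4 + 45 * z ^ 4) (hy3 : ¬(3 : ℤ) ∣ y)
    (hq : q.Prime) (hq4 : q % 4 = 3) (hqQ : (q : ℤ) ∣ 3 * z ^ 2 + y ^ 2) :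
    ¬(q : ℤ) ∣ 5 * (3 * z ^ 2 - y ^ 2) := by
  have : Fact q.Prime := ⟨hq⟩
  have hqZ : Prime (q : ℤ) := Nat.prime_iff_prime_int.mp hq
  have hq3 : q ≠ 3 := by
    rintro rfl
    exact hy3 (Int.prime_three.dvd_of_dvd_pow ((dvd_add_right (dvd_mul_right 3 _)).mp hqQ))
  have hq30 : ¬(q : ℤ) ∣ 30 := by
    intro hdvd
    have hle := Nat.le_of_dvd (by norm_num) (Int.natCast_dvd_natCast.mp hdvd)
    interval_cases q <;> first | omega | norm_num at hq
  intro hqP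
  have hqP' : (q : ℤ) ∣ 3 * z ^ 2 - y ^ 2 :=
    (hqZ.dvd_or_dvd hqP).resolve_left fun h5 ↦ hq30 (h5.mul_right 6)
  have h6z : (q : ℤ) ∣ 6 * z ^ 2 := by
    rw [show 6 * z ^ 2 = (3 * z ^ 2 + y ^ 2) + (3 * z ^ 2 - y ^ 2) by ring]
    exact dvd_add hqQ hqP'
  have h2y : (q : ℤ) ∣ 2 * y ^ 2 := by
    rw [show 2 * y ^ 2 = (3 * z ^ 2 + y ^ 2) - (3 * z ^ 2 - y ^ 2) by ring]
    exact dvd_sub hqQ hqP'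
  have hz : (q : ℤ) ∣ z := hqZ.dvd_of_dvd_pow <|
    (hqZ.dvd_or_dvd h6z).resolve_left fun h6 ↦ hq30 (h6.mul_right 5)
  have hy : (q : ℤ) ∣ y := hqZ.dvd_of_dvd_pow <|
    (hqZ.dvd_or_dvd h2y).resolve_left fun h2 ↦ hq30 (h2.mul_right 15)
  have hx : (q : ℤ) ∣ x := by
    have hfac : w ^ 2 + (5 * x ^ 2) ^ 2 = 5 * (3 * z ^ 2 - y ^ 2) * (3 * z ^ 2 + y ^ 2) := by
      linear_combination h
    have h5x : (q : ℤ) ∣ 5 * x ^ 2 :=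
      Int.dvd_right_of_dvd_sq_add_sq (a := w) hq4 (hfac ▸ hqQ.mul_left _)
    exact hqZ.dvd_of_dvd_pow ((hqZ.dvd_or_dvd h5x).resolve_left fun h5 ↦ hq30 (h5.mul_right 6))
  exact hprim q hq hx hy hz

theorem sq_ne_of_isPrimitiveTriple {w x y z : ℤ} (hprim : IsPrimitiveTriple x y z) :
    w ^ 2 ≠ -25 * x ^ 4 - 5 * y ^ 4 + 45 * z ^ 4 := by
  intro h
  obtain ⟨hy2, hz2⟩ := even_and_odd_of_isPrimitiveTriple hprim h
  have hy3 := not_three_dvd_of_isPrimitiveTriple hprim h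
  obtain ⟨s, t, hst⟩ := Int.exists_sq_add_sq_of_mul_eq_sq_add_sq (m := 5 * (3 * z ^ 2 - y ^ 2))
    (a := w) (b := 5 * x ^ 2) (by linear_combination -h) (by positivity)
    fun q hq hq4 hqQ ↦ not_dvd_of_dvd_three_mul_sq_add_sq hprim h hy3 hq hq4 hqQ
  exact three_mul_sq_add_sq_ne_sq_add_sq hy2 hz2 hst

/-- The equation `w² = −25x⁴ − 5y⁴ + 45z⁴` has no rational solution with
`(x, y, z) ≠ (0, 0, 0)`. -/
theorem no_rational_points_minus25_minus5_45 :
    ¬ ∃ w x y z : ℚ, w ^ 2 = -25 * x ^ 4 - 5 * y ^ 4 + 45 * z ^ 4 ∧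
      (x, y, z) ≠ (0, 0, 0) := by
  rintro ⟨w, x, y, z, h, hne⟩
  obtain ⟨w, x, y, z, h, hne⟩ :=
    exists_int_solution_of_rat (A := -25) (B := -5) (C := 45) (w := w)
      (by push_cast; linear_combination h) hne
  obtain ⟨w, x, y, z, h, hprim⟩ := exists_primitive_solution h hne
  exact sq_ne_of_isPrimitiveTriple (w := w) hprim (by linear_combination h)
end

section
/- For all 2-adic integers w, x, y, z ∈ ℤ₂ satisfying w² = −25·x⁴ − 5·y⁴ + 45·z⁴ and such that not all of x, y, z are divisible by 2: x and z are units in ℤ₂, y is divisible by 2, and −5·x² − 2·y² + 9·z² ≡ 12 (mod 16) in ℤ₂. -/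
open PadicInt

private lemma pow_dvd_iff' (n : ℕ) (u : ℤ_[2]) :
    (2:ℤ_[2])^n ∣ u ↔ PadicInt.toZModPow n u = 0 := by
  rw [show ((2:ℤ_[2])) = ((2:ℕ):ℤ_[2]) by norm_num, ← Ideal.mem_span_singleton,
    ← PadicInt.ker_toZModPow, RingHom.mem_ker]

private lemma two_dvd_iff' (u : ℤ_[2]) :
    (2:ℤ_[2]) ∣ u ↔ PadicInt.toZModPow 1 u = 0 := by
  have := pow_dvd_iff' 1 u
  rwa [pow_one] at this

private lemma odd_form (u : ℤ_[2]) (h : ¬(2:ℤ_[2]) ∣ u) : ∃ a, u = 1 + 2*a := by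
  rw [two_dvd_iff'] at h
  have h1 : PadicInt.toZModPow 1 u = 1 := by
    revert h; generalize PadicInt.toZModPow 1 u = v; revert v; decide
  have h2 : (2:ℤ_[2]) ∣ (u - 1) := by
    rw [two_dvd_iff', map_sub, map_one, h1, sub_self]
  obtain ⟨a, ha⟩ := h2
  exact ⟨a, by linear_combination ha⟩

private lemma odd_sq (u : ℤ_[2]) (h : ¬(2:ℤ_[2]) ∣ u) : ∃ t, u^2 = 1 + 8*t := by
  obtain ⟨a, ha⟩ := odd_form u h
  by_cases h2 : (2:ℤ_[2]) ∣ a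
  · obtain ⟨t, ht⟩ := h2
    exact ⟨t + 2*t^2, by subst ha ht; ring⟩
  · obtain ⟨t, ht⟩ := odd_form a h2
    exact ⟨1 + 3*t + 2*t^2, by subst ha ht; ring⟩

private lemma odd_pow4 (u : ℤ_[2]) (h : ¬(2:ℤ_[2]) ∣ u) :
    ∃ t, u^2 = 1 + 8*t ∧ u^4 = 1 + 16*(t + 4*t^2) := by
  obtain ⟨t, ht⟩ := odd_sq u h
  refine ⟨t, ht, ?_⟩
  have h4 : u^4 = (u^2)^2 := by ring
  rw [h4, ht]; ring

/-- The 2-adic local computation of Example 7.1: at every primitive 2-adic integral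
point of `w² = −25x⁴ − 5y⁴ + 45z⁴`, `x` and `z` are units, `y` is even, and
`−5x² − 2y² + 9z² ≡ 12 (mod 16)`. -/
theorem two_adic_analysis_minus25_minus5_45 (w x y z : ℤ_[2])
    (heq : w ^ 2 = -25 * x ^ 4 - 5 * y ^ 4 + 45 * z ^ 4)
    (hnz : ¬((2 : ℤ_[2]) ∣ x ∧ (2 : ℤ_[2]) ∣ y ∧ (2 : ℤ_[2]) ∣ z)) :
    IsUnit x ∧ IsUnit z ∧ (2 : ℤ_[2]) ∣ y ∧
      (16 : ℤ_[2]) ∣ (-5 * x ^ 2 - 2 * y ^ 2 + 9 * z ^ 2 - 12) := by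
  have unit_of_not_dvd : ∀ u : ℤ_[2], ¬(2:ℤ_[2]) ∣ u → IsUnit u := by
    intro u hu
    rw [PadicInt.isUnit_iff]
    have h1 := PadicInt.norm_le_one u
    have h2 : ¬ ‖u‖ < 1 := fun hc => hu ((PadicInt.norm_lt_one_iff_dvd u).mp hc)
    cases lt_or_eq_of_le h1 with
    | inl h => exact absurd h h2
    | inr h => exact h
  have contra : ∀ (c : ℕ), (∀ v : ZMod (2^4), v^2 ≠ (c : ZMod (2^4))) →
      ∀ K : ℤ_[2], w^2 = (c : ℤ_[2]) + 16*K → False := by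
    intro c hc K hK
    have h := congrArg (PadicInt.toZModPow 4) hK
    simp only [map_pow, map_add, map_mul, map_natCast, map_ofNat] at h
    have h16 : (16 : ZMod (2^4)) = 0 := by decide
    rw [h16, zero_mul, add_zero] at h
    exact hc _ h
  by_cases hx : (2:ℤ_[2]) ∣ x
  · -- x even : all cases bad
    obtain ⟨a, ha⟩ := hx
    have hx4 : x^4 = 16*a^4 := by rw [ha]; ring
    by_cases hy : (2:ℤ_[2]) ∣ y
    · obtain ⟨b, hb⟩ := hy
      have hy4 : y^4 = 16*b^4 := by rw [hb]; ring
      by_cases hz : (2:ℤ_[2]) ∣ z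
      · exact absurd ⟨⟨a, ha⟩, ⟨b, hb⟩, hz⟩ hnz
      · -- c = 45 ≡ 13
        obtain ⟨c', _, hz4⟩ := odd_pow4 z hz
        refine absurd (?_ : w^2 = ((13:ℕ) : ℤ_[2]) + 16*(2 - 25*a^4 - 5*b^4 + 45*(c'+4*c'^2)))
          fun h => contra 13 (by decide) _ h
        push_cast
        linear_combination heq - 25*hx4 - 5*hy4 + 45*hz4
    · obtain ⟨b, _, hy4⟩ := odd_pow4 y hy
      by_cases hz : (2:ℤ_[2]) ∣ z
      · -- c = -5 ≡ 11
        obtain ⟨c', hc⟩ := hz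
        have hz4 : z^4 = 16*c'^4 := by rw [hc]; ring
        refine absurd (?_ : w^2 = ((11:ℕ) : ℤ_[2]) + 16*(-1 - 25*a^4 - 5*(b+4*b^2) + 45*c'^4))
          fun h => contra 11 (by decide) _ h
        push_cast
        linear_combination heq - 25*hx4 - 5*hy4 + 45*hz4
      · -- c = 40 ≡ 8
        obtain ⟨c', _, hz4⟩ := odd_pow4 z hz
        refine absurd (?_ : w^2 = ((8:ℕ) : ℤ_[2]) + 16*(2 - 25*a^4 - 5*(b+4*b^2) + 45*(c'+4*c'^2)))
          fun h => contra 8 (by decide) _ h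
        push_cast
        linear_combination heq - 25*hx4 - 5*hy4 + 45*hz4
  · -- x odd
    obtain ⟨a', hx2, hx4⟩ := odd_pow4 x hx
    by_cases hy : (2:ℤ_[2]) ∣ y
    · obtain ⟨b, hb⟩ := hy
      have hy2 : y^2 = 4*b^2 := by rw [hb]; ring
      have hy4 : y^4 = 16*b^4 := by rw [hb]; ring
      by_cases hz : (2:ℤ_[2]) ∣ z
      · -- c = -25 ≡ 7
        obtain ⟨c', hc⟩ := hz
        have hz4 : z^4 = 16*c'^4 := by rw [hc]; ring
        refine absurd (?_ : w^2 = ((7:ℕ) : ℤ_[2]) + 16*(-2 - 25*(a'+4*a'^2) - 5*b^4 + 45*c'^4))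
          fun h => contra 7 (by decide) _ h
        push_cast
        linear_combination heq - 25*hx4 - 5*hy4 + 45*hz4
      · -- GOOD case: x, z odd, y even
        obtain ⟨c', hz2, hz4⟩ := odd_pow4 z hz
        refine ⟨unit_of_not_dvd x hx, unit_of_not_dvd z hz, ⟨b, hb⟩, ?_⟩
        set s : ℤ_[2] := -25*(a'+4*a'^2) - 5*b^4 + 45*(c'+4*c'^2) with hs_def
        have hs : w^2 = 20 + 16*s := by
          rw [hs_def]; linear_combination heq - 25*hx4 - 5*hy4 + 45*hz4
        -- w is even
        have hwe : (2:ℤ_[2]) ∣ w := by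
          rw [two_dvd_iff']
          have h := congrArg (PadicInt.toZModPow 1) hs
          simp only [map_pow, map_add, map_mul, map_ofNat] at h
          revert h
          generalize PadicInt.toZModPow 1 w = V
          generalize PadicInt.toZModPow 1 s = S
          revert V S; decide
        obtain ⟨v, hw⟩ := hwe
        have hv : (4:ℤ_[2]) * v^2 = 4 * (5 + 4*s) := by
          linear_combination hs - (by rw [hw]; ring : w^2 = 4*v^2)
        have hv' : v^2 = 5 + 4*s := mul_left_cancel₀ (by norm_num : (4:ℤ_[2]) ≠ 0) hv
        -- mod 8 : s is odd
        have h8 := congrArg (PadicInt.toZModPow 3) hv'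
        simp only [map_pow, map_add, map_mul, map_ofNat] at h8
        have key8 : ∀ V S : ZMod (2^3), V^2 = 5 + 4*S →
            ZMod.castHom (by norm_num : (2^1:ℕ) ∣ 2^3) (ZMod (2^1)) S = 1 := by decide
        have hs3 := key8 _ _ h8
        rw [ZMod.castHom_apply, PadicInt.cast_toZModPow 1 3 (by norm_num)] at hs3
        -- transfer parity to the target expression
        have key2 : ∀ α β γ : ZMod (2^1),
            -25*(α+4*α^2) - 5*β^4 + 45*(γ+4*γ^2) = 1 → -5*α - β^2 + 9*γ - 1 = 0 := by decide
        have hψ : PadicInt.toZModPow 1 s =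
            -25*((PadicInt.toZModPow 1 a')+4*(PadicInt.toZModPow 1 a')^2)
            - 5*(PadicInt.toZModPow 1 b)^4
            + 45*((PadicInt.toZModPow 1 c')+4*(PadicInt.toZModPow 1 c')^2) := by
          rw [hs_def]
          simp only [map_sub, map_add, map_mul, map_pow, map_ofNat, map_neg]
        have hfin : PadicInt.toZModPow 1 (-5*a' - b^2 + 9*c' - 1) = 0 := by
          have h0 := key2 _ _ _ (hψ ▸ hs3)
          simp only [map_sub, map_add, map_mul, map_pow, map_ofNat, map_neg, map_one]
          linear_combination h0
        have hdvd : (2:ℤ_[2]) ∣ (-5*a' - b^2 + 9*c' - 1) := (two_dvd_iff' _).mpr hfin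
        obtain ⟨u, hu⟩ := hdvd
        exact ⟨u, by linear_combination -5*hx2 - 2*hy2 + 9*hz2 + 8*hu⟩
    · -- y odd
      obtain ⟨b, _, hy4⟩ := odd_pow4 y hy
      by_cases hz : (2:ℤ_[2]) ∣ z
      · -- c = -30 ≡ 2
        obtain ⟨c', hc⟩ := hz
        have hz4 : z^4 = 16*c'^4 := by rw [hc]; ring
        refine absurd (?_ : w^2 = ((2:ℕ) : ℤ_[2]) + 16*(-2 - 25*(a'+4*a'^2) - 5*(b+4*b^2) + 45*c'^4))
          fun h => contra 2 (by decide) _ h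
        push_cast
        linear_combination heq - 25*hx4 - 5*hy4 + 45*hz4
      · -- c = 15
        obtain ⟨c', _, hz4⟩ := odd_pow4 z hz
        refine absurd (?_ : w^2 = ((15:ℕ) : ℤ_[2]) + 16*(-25*(a'+4*a'^2) - 5*(b+4*b^2) + 45*(c'+4*c'^2)))
          fun h => contra 15 (by decide) _ h
        push_cast
        linear_combination heq - 25*hx4 - 5*hy4 + 45*hz4
end

section
/- The equation w² = −126·x⁴ − 91·y⁴ + 78·z⁴ has no solution (w, x, y, z) ∈ ℚ⁴ with (x, y, z) ≠ (0, 0, 0). -/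
/-- If `p ≡ 2 mod 3` is an odd prime, then `-3` is not a square mod `p`. -/
lemma aux_no_sqrt_neg_three (p : ℕ) (pp : p.Prime) (hp2 : p ≠ 2) (hp3 : p % 3 = 2)
    (u : ZMod p) (hu : u ^ 2 = -3) : False := by
  haveI : Fact p.Prime := ⟨pp⟩
  have h2 : (2 : ZMod p) ≠ 0 := by
    intro h
    have : ((2 : ℕ) : ZMod p) = 0 := by exact_mod_cast h
    have := (ZMod.natCast_eq_zero_iff 2 p).mp this
    exact hp2 ((Nat.prime_dvd_prime_iff_eq pp Nat.prime_two).mp this)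
  set ω : ZMod p := (u - 1) * (2 : ZMod p)⁻¹ with hω
  have h2ω : 2 * ω = u - 1 := by
    rw [hω, mul_comm (u-1), ← mul_assoc, mul_inv_cancel₀ h2, one_mul]
  have h4 : (4 : ZMod p) * (ω ^ 2 + ω + 1) = 0 := by
    linear_combination (2 * ω + u + 1) * h2ω + hu
  have h4ne : (4 : ZMod p) ≠ 0 := by
    intro h
    have : ((4 : ℕ) : ZMod p) = 0 := by exact_mod_cast h
    have h4' := (ZMod.natCast_eq_zero_iff 4 p).mp this
    have : p ∣ 2 := (Nat.Prime.dvd_of_dvd_pow (n := 2) pp (by norm_num at h4' ⊢; exact h4'))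
    exact hp2 ((Nat.prime_dvd_prime_iff_eq pp Nat.prime_two).mp this)
  have hkey : ω ^ 2 + ω + 1 = 0 := (mul_eq_zero.mp h4).resolve_left h4ne
  have hω3 : ω ^ 3 = 1 := by linear_combination (ω - 1) * hkey
  have hω1 : ω ≠ 1 := by
    intro h
    rw [h] at hkey
    have h3 : ((3 : ℕ) : ZMod p) = 0 := by push_cast; linear_combination hkey
    have := (ZMod.natCast_eq_zero_iff 3 p).mp h3
    have hp3' := (Nat.prime_dvd_prime_iff_eq pp Nat.prime_three).mp this
    rw [hp3'] at hp3; norm_num at hp3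
  have hω0 : ω ≠ 0 := by
    intro h
    rw [h] at hkey
    norm_num at hkey
  haveI : Fact (Nat.Prime 3) := ⟨by norm_num⟩
  have horder : orderOf ω = 3 := orderOf_eq_prime hω3 hω1
  have hdvd : orderOf ω ∣ p - 1 := ZMod.orderOf_dvd_card_sub_one hω0
  rw [horder] at hdvd
  obtain ⟨k, hk⟩ := hdvd
  have := pp.two_le
  omega

/-- If `p ≡ 2 mod 3` is an odd prime dividing `a² + 3b²`, it divides both `a` and `b`. -/
lemma aux_dvd_of_dvd (p : ℕ) (pp : p.Prime) (hp2 : p ≠ 2) (hp3 : p % 3 = 2)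
    (a b : ℤ) (h : (p : ℤ) ∣ a ^ 2 + 3 * b ^ 2) : (p : ℤ) ∣ a ∧ (p : ℤ) ∣ b := by
  haveI : Fact p.Prime := ⟨pp⟩
  have h0 : ((a : ZMod p)) ^ 2 + 3 * (b : ZMod p) ^ 2 = 0 := by
    have := (ZMod.intCast_zmod_eq_zero_iff_dvd (a ^ 2 + 3 * b ^ 2) p).mpr h
    push_cast at this
    exact this
  by_cases hb : (b : ZMod p) = 0
  · rw [hb] at h0
    have ha : (a : ZMod p) ^ 2 = 0 := by linear_combination h0
    have ha0 : (a : ZMod p) = 0 := by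
      have := sq_eq_zero_iff.mp ha
      exact this
    exact ⟨(ZMod.intCast_zmod_eq_zero_iff_dvd a p).mp ha0,
      (ZMod.intCast_zmod_eq_zero_iff_dvd b p).mp hb⟩
  · exfalso
    apply aux_no_sqrt_neg_three p pp hp2 hp3 ((a : ZMod p) * (b : ZMod p)⁻¹)
    have hbb : (b : ZMod p) * (b : ZMod p)⁻¹ = 1 := mul_inv_cancel₀ hb
    calc ((a : ZMod p) * (b : ZMod p)⁻¹) ^ 2
        = ((a:ZMod p)^2 + 3*(b:ZMod p)^2) * ((b:ZMod p)⁻¹)^2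
          - 3 * ((b:ZMod p) * (b:ZMod p)⁻¹)^2 := by ring
      _ = -3 := by rw [h0, hbb]; ring

/-- For `p ≡ 2 mod 3` odd prime, `p`-adic valuation of `a² + 3b²` is even. -/
lemma aux_even_factorization (p : ℕ) (pp : p.Prime) (hp2 : p ≠ 2) (hp3 : p % 3 = 2) :
    ∀ N : ℕ, ∀ a b : ℤ, a ^ 2 + 3 * b ^ 2 ≠ 0 → (a ^ 2 + 3 * b ^ 2).natAbs = N →
      Even (N.factorization p) := by
  intro N
  induction N using Nat.strong_induction_on with
  | _ N ih =>
    intro a b hne hN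
    by_cases hdvd : p ∣ N
    · have hdZ : (p : ℤ) ∣ a ^ 2 + 3 * b ^ 2 := by
        refine dvd_trans ?_ (Int.natAbs_dvd.mpr dvd_rfl)
        rw [hN]; exact_mod_cast Int.natCast_dvd_natCast.mpr hdvd
      obtain ⟨hda, hdb⟩ := aux_dvd_of_dvd p pp hp2 hp3 a b hdZ
      obtain ⟨a', ha'⟩ := hda
      obtain ⟨b', hb'⟩ := hdb
      have hfac : a ^ 2 + 3 * b ^ 2 = (p:ℤ) ^ 2 * (a' ^ 2 + 3 * b' ^ 2) := by
        rw [ha', hb']; ring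
      have hne' : a' ^ 2 + 3 * b' ^ 2 ≠ 0 := by
        intro h; rw [hfac, h, mul_zero] at hne; exact hne rfl
      set N' := (a' ^ 2 + 3 * b' ^ 2).natAbs with hN'
      have hNN' : N = p ^ 2 * N' := by
        rw [← hN, hfac, Int.natAbs_mul, Int.natAbs_pow, Int.natAbs_natCast]
      have hN'0 : N' ≠ 0 := fun h => hne' (Int.natAbs_eq_zero.mp h)
      have hN'lt : N' < N := by
        rw [hNN']
        have hp4 : 4 ≤ p ^ 2 := by nlinarith [pp.two_le]
        have : 0 < N' := Nat.pos_of_ne_zero hN'0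
        nlinarith
      have hNfact : N.factorization p = 2 + N'.factorization p := by
        rw [hNN', Nat.factorization_mul (pow_ne_zero 2 pp.ne_zero) hN'0]
        rw [Finsupp.add_apply, Nat.Prime.factorization_pow pp]
        simp
      rw [hNfact]
      exact (even_two).add (ih N' hN'lt a' b' hne' rfl)
    · rw [Nat.factorization_eq_zero_of_not_dvd hdvd]
      exact Even.zero

/-- If every prime `q ≡ 2 mod 3` divides `k` to an even power and `3 ∤ k`, `k ≠ 0`,
then `k ≡ 1 mod 3`. -/
lemma aux_one_mod_three :
    ∀ k : ℕ, k ≠ 0 → ¬ (3 ∣ k) →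
      (∀ q : ℕ, q.Prime → q % 3 = 2 → Even (k.factorization q)) → k % 3 = 1 := by
  intro k
  induction k using Nat.strong_induction_on with
  | _ k ih =>
    intro hk0 hk3 hfact
    rcases eq_or_ne k 1 with rfl | hk1
    · rfl
    have pq : (k.minFac).Prime := Nat.minFac_prime hk1
    set q := k.minFac with hqdef
    have hqk : q ∣ k := Nat.minFac_dvd k
    have hq3 : q ≠ 3 := by intro h; rw [h] at hqk; exact hk3 hqk
    have hq0 : q % 3 ≠ 0 := by
      intro h
      have h3q : 3 ∣ q := Nat.dvd_of_mod_eq_zero h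
      exact hq3 ((Nat.prime_dvd_prime_iff_eq Nat.prime_three pq).mp h3q).symm
    have hqlt : q % 3 = 0 ∨ q % 3 = 1 ∨ q % 3 = 2 := by omega
    rcases hqlt with h | h | h
    · exact absurd h hq0
    · -- q ≡ 1 mod 3
      set k' := k / q with hk'def
      have hkk' : k = q * k' := (Nat.mul_div_cancel' hqk).symm
      have hk'0 : k' ≠ 0 := by
        intro h; rw [h, mul_zero] at hkk'; exact hk0 hkk'
      have hk'lt : k' < k := Nat.div_lt_self (Nat.pos_of_ne_zero hk0) pq.one_lt
      have hk'3 : ¬ (3 ∣ k') := by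
        intro hd; exact hk3 (hkk' ▸ Dvd.dvd.mul_left hd q)
      have hfact' : ∀ r : ℕ, r.Prime → r % 3 = 2 → Even (k'.factorization r) := by
        intro r pr hr
        have hrq : r ≠ q := by intro hrq; rw [hrq, h] at hr; norm_num at hr
        have : k'.factorization = k.factorization - q.factorization :=
          Nat.factorization_div hqk
        rw [this, Finsupp.tsub_apply, Nat.Prime.factorization pq,
          Finsupp.single_apply, if_neg (Ne.symm hrq), Nat.sub_zero]
        exact hfact r pr hr
      have hk'm := ih k' hk'lt hk'0 hk'3 hfact'
      have : k % 3 = q % 3 * (k' % 3) % 3 := by rw [hkk', Nat.mul_mod]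
      rw [this, h, hk'm]
    · -- q ≡ 2 mod 3
      have hEv : Even (k.factorization q) := hfact q pq h
      have hpos : 0 < k.factorization q := pq.factorization_pos_of_dvd hk0 hqk
      have h2le : 2 ≤ k.factorization q := by
        obtain ⟨c, hc⟩ := hEv; omega
      have hq2k : q ^ 2 ∣ k := (Nat.Prime.pow_dvd_iff_le_factorization pq hk0).mpr h2le
      set k' := k / q ^ 2 with hk'def
      have hkk' : k = q ^ 2 * k' := (Nat.mul_div_cancel' hq2k).symm
      have hk'0 : k' ≠ 0 := by
        intro hh; rw [hh, mul_zero] at hkk'; exact hk0 hkk'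
      have hk'lt : k' < k := Nat.div_lt_self (Nat.pos_of_ne_zero hk0)
        (by nlinarith [pq.two_le])
      have hk'3 : ¬ (3 ∣ k') := by
        intro hd; exact hk3 (hkk' ▸ Dvd.dvd.mul_left hd (q ^ 2))
      have hfact' : ∀ r : ℕ, r.Prime → r % 3 = 2 → Even (k'.factorization r) := by
        intro r pr hr
        have : k'.factorization = k.factorization - (q ^ 2).factorization :=
          Nat.factorization_div hq2k
        rw [this, Finsupp.tsub_apply, Nat.Prime.factorization_pow pq,
          Finsupp.single_apply]
        by_cases hqr : q = r
        · rw [if_pos hqr]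
          obtain ⟨c, hc⟩ := hfact r pr hr
          exact ⟨c - 1, by omega⟩
        · rw [if_neg hqr, Nat.sub_zero]; exact hfact r pr hr
      have hk'm := ih k' hk'lt hk'0 hk'3 hfact'
      have : k % 3 = q ^ 2 % 3 * (k' % 3) % 3 := by rw [hkk', Nat.mul_mod]
      have hq2 : q ^ 2 % 3 = 1 := by
        rw [Nat.pow_mod, h]
      rw [‹k % 3 = _›, hq2, hk'm]


/-- Descent to a primitive integral solution. -/
lemma aux_descent : ∀ n : ℕ, ∀ W X Y Z : ℤ, X.natAbs + Y.natAbs + Z.natAbs = n →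
    ¬(X = 0 ∧ Y = 0 ∧ Z = 0) → W ^ 2 = -126 * X ^ 4 + -91 * Y ^ 4 + 78 * Z ^ 4 →
    ∃ W' X' Y' Z' : ℤ, Int.gcd X' (Int.gcd Y' Z') = 1 ∧
      W' ^ 2 = -126 * X' ^ 4 + -91 * Y' ^ 4 + 78 * Z' ^ 4 := by
  intro n
  induction n using Nat.strong_induction_on with
  | _ n ih =>
    intro W X Y Z hn hne heq
    set g : ℕ := Int.gcd X (Int.gcd Y Z) with hg
    have hg0 : g ≠ 0 := by
      intro h
      rw [hg] at h
      obtain ⟨hX, hYZ⟩ := Int.gcd_eq_zero_iff.mp h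
      norm_cast at hYZ
      obtain ⟨hY, hZ⟩ := Int.gcd_eq_zero_iff.mp hYZ
      exact hne ⟨hX, hY, hZ⟩
    rcases eq_or_ne g 1 with hg1 | hg1
    · exact ⟨W, X, Y, Z, hg ▸ hg1, heq⟩
    have hg2 : 2 ≤ g := by omega
    have hdX : (g : ℤ) ∣ X := Int.gcd_dvd_left _ _
    have hdY : (g : ℤ) ∣ Y := dvd_trans (hg ▸ Int.gcd_dvd_right _ _) (Int.gcd_dvd_left _ _)
    have hdZ : (g : ℤ) ∣ Z := dvd_trans (hg ▸ Int.gcd_dvd_right _ _) (Int.gcd_dvd_right _ _)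
    obtain ⟨X', hX'⟩ := hdX
    obtain ⟨Y', hY'⟩ := hdY
    obtain ⟨Z', hZ'⟩ := hdZ
    have hW4 : W ^ 2 = (g : ℤ) ^ 4 * (-126 * X' ^ 4 + -91 * Y' ^ 4 + 78 * Z' ^ 4) := by
      rw [heq, hX', hY', hZ']; ring
    have hdW : ((g : ℤ) ^ 2) ^ 2 ∣ W ^ 2 :=
      ⟨-126 * X' ^ 4 + -91 * Y' ^ 4 + 78 * Z' ^ 4, by rw [hW4]; ring⟩
    have hdW' : (g : ℤ) ^ 2 ∣ W := (Int.pow_dvd_pow_iff (two_ne_zero)).mp hdW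
    obtain ⟨W', hWeq⟩ := hdW'
    have hgZ : ((g : ℤ) ^ 4) ≠ 0 := by positivity
    have heq' : W' ^ 2 = -126 * X' ^ 4 + -91 * Y' ^ 4 + 78 * Z' ^ 4 := by
      have : (g:ℤ)^4 * W' ^ 2 = (g:ℤ)^4 * (-126 * X' ^ 4 + -91 * Y' ^ 4 + 78 * Z' ^ 4) := by
        rw [← hW4, hWeq]; ring
      exact mul_left_cancel₀ hgZ this
    have hne' : ¬(X' = 0 ∧ Y' = 0 ∧ Z' = 0) := by
      rintro ⟨h1, h2, h3⟩
      exact hne ⟨by rw [hX', h1, mul_zero], by rw [hY', h2, mul_zero],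
        by rw [hZ', h3, mul_zero]⟩
    have habs : X.natAbs = g * X'.natAbs ∧ Y.natAbs = g * Y'.natAbs ∧
        Z.natAbs = g * Z'.natAbs := by
      refine ⟨?_, ?_, ?_⟩ <;>
        [rw [hX']; rw [hY']; rw [hZ']] <;>
        rw [Int.natAbs_mul, Int.natAbs_natCast]
    have hlt : X'.natAbs + Y'.natAbs + Z'.natAbs < n := by
      have hne0 : X'.natAbs + Y'.natAbs + Z'.natAbs ≠ 0 := by
        intro h
        apply hne'
        refine ⟨?_, ?_, ?_⟩ <;> rw [← Int.natAbs_eq_zero] <;> omega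
      obtain ⟨h1, h2, h3⟩ := habs
      have m1 : 2 * X'.natAbs ≤ g * X'.natAbs := Nat.mul_le_mul_right _ hg2
      have m2 : 2 * Y'.natAbs ≤ g * Y'.natAbs := Nat.mul_le_mul_right _ hg2
      have m3 : 2 * Z'.natAbs ≤ g * Z'.natAbs := Nat.mul_le_mul_right _ hg2
      omega
    exact ih _ hlt W' X' Y' Z' rfl hne' heq'

set_option maxRecDepth 40000 in
set_option maxHeartbeats 4000000 in
lemma aux_mod16 : ∀ w x y z : ZMod 16, w^2 = -126*x^4 + -91*y^4 + 78*z^4 →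
    ¬(8*x = 0 ∧ 8*y = 0 ∧ 8*z = 0) → (8*y = 0 ∧ 8*x = 8 ∧ 8*z = 8) := by decide

set_option maxRecDepth 10000 in
set_option maxHeartbeats 1000000 in
lemma aux_mod9 : ∀ w x y z : ZMod 9, w^2 = -126*x^4 + -91*y^4 + 78*z^4 →
    ¬(3*x = 0 ∧ 3*y = 0 ∧ 3*z = 0) → (3*y = 0 ∧ 3*z = 0 ∧ 3*x ≠ 0) := by decide

lemma aux_mod5 : ∀ x y z : ZMod 5, -3*x^2+5*y^2+z^2 = 0 → (x = 0 ∧ z = 0) := by decide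


lemma aux_t (m : ℤ) (hpos : 0 < m) (h4 : m % 4 = 2) (h9 : m % 9 = 3) :
    ∃ t : ℤ, m = 6 * t ∧ 0 < t ∧ t % 2 = 1 ∧ t % 3 = 2 :=
  ⟨m / 6, by omega⟩

lemma aux_T (t : ℤ) (h0 : 0 < t) (h2 : t % 2 = 1) (h3 : t % 3 = 2) :
    t.natAbs ≠ 0 ∧ ¬ (3 ∣ t.natAbs) ∧ ¬ (2 ∣ t.natAbs) := by
  have := Int.natAbs_of_nonneg h0.le
  omega

lemma aux_T2 (t : ℤ) (h0 : 0 < t) (h3 : t % 3 = 2) (h : t.natAbs % 3 = 1) : False := by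
  have := Int.natAbs_of_nonneg h0.le
  omega

lemma aux_L_ne (X Y Z : ℤ) (h : ∀ q : ℤ, q ∣ X → q ∣ Y → q ∣ Z → q ∣ 1) :
    -3 * X ^ 2 + 5 * Y ^ 2 + Z ^ 2 ≠ 0 := by
  intro h0
  have e5 : -3 * (X : ZMod 5) ^ 2 + 5 * (Y : ZMod 5) ^ 2 + (Z : ZMod 5) ^ 2 = 0 := by
    have := congrArg (fun t : ℤ => (t : ZMod 5)) h0
    push_cast at this
    exact this
  obtain ⟨hx5, hz5⟩ := aux_mod5 _ _ _ e5
  obtain ⟨a, rfl⟩ := (ZMod.intCast_zmod_eq_zero_iff_dvd X 5).mp hx5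
  obtain ⟨c, rfl⟩ := (ZMod.intCast_zmod_eq_zero_iff_dvd Z 5).mp hz5
  have h5Y2 : (5 : ℤ) ∣ Y ^ 2 := by
    refine ⟨3 * a ^ 2 - c ^ 2, mul_left_cancel₀ (by norm_num : (5:ℤ) ≠ 0) ?_⟩
    linear_combination h0
  have hp5 : Prime (5 : ℤ) := by norm_num
  have h5Y : (5 : ℤ) ∣ Y := hp5.dvd_of_dvd_pow h5Y2
  have := h 5 ⟨a, rfl⟩ h5Y ⟨c, rfl⟩
  norm_num at this

lemma aux_main (W X Y Z : ℤ) (hg : Int.gcd X (Int.gcd Y Z) = 1)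
    (heq : W ^ 2 = -126 * X ^ 4 + -91 * Y ^ 4 + 78 * Z ^ 4) : False := by
  have hco : ∀ q : ℤ, q ∣ X → q ∣ Y → q ∣ Z → q ∣ 1 := by
    intro q h1 h2 h3
    have := Int.dvd_coe_gcd h1 (Int.dvd_coe_gcd h2 h3)
    rw [hg] at this
    exact_mod_cast this
  -- 2-adic information
  have e16 : ((W : ZMod 16)) ^ 2 = -126 * (X : ZMod 16) ^ 4 + -91 * (Y : ZMod 16) ^ 4
      + 78 * (Z : ZMod 16) ^ 4 := by
    have := congrArg (fun t : ℤ => (t : ZMod 16)) heq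
    push_cast at this
    exact this
  have hcast16 : ∀ a : ℤ, (8 * (a : ZMod 16) = 0 ↔ (2 : ℤ) ∣ a) := by
    intro a
    have h8 : (8 : ZMod 16) * (a : ZMod 16) = ((8 * a : ℤ) : ZMod 16) := by push_cast; ring
    rw [h8, ZMod.intCast_zmod_eq_zero_iff_dvd]
    omega
  have h16 := aux_mod16 (W : ZMod 16) (X : ZMod 16) (Y : ZMod 16) (Z : ZMod 16) e16 (by
    rintro ⟨ha, hb, hc⟩
    have := hco 2 ((hcast16 X).mp ha) ((hcast16 Y).mp hb) ((hcast16 Z).mp hc)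
    norm_num at this)
  obtain ⟨hy16, hx16, hz16⟩ := h16
  have h2Y : (2 : ℤ) ∣ Y := (hcast16 Y).mp hy16
  have h2X : ¬ (2 : ℤ) ∣ X := by
    intro h
    have := (hcast16 X).mpr h
    rw [hx16] at this
    exact (by decide : (8 : ZMod 16) ≠ 0) this
  have h2Z : ¬ (2 : ℤ) ∣ Z := by
    intro h
    have := (hcast16 Z).mpr h
    rw [hz16] at this
    exact (by decide : (8 : ZMod 16) ≠ 0) this
  -- 3-adic information
  have e9 : ((W : ZMod 9)) ^ 2 = -126 * (X : ZMod 9) ^ 4 + -91 * (Y : ZMod 9) ^ 4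
      + 78 * (Z : ZMod 9) ^ 4 := by
    have := congrArg (fun t : ℤ => (t : ZMod 9)) heq
    push_cast at this
    exact this
  have hcast9 : ∀ a : ℤ, (3 * (a : ZMod 9) = 0 ↔ (3 : ℤ) ∣ a) := by
    intro a
    have h3 : (3 : ZMod 9) * (a : ZMod 9) = ((3 * a : ℤ) : ZMod 9) := by push_cast; ring
    rw [h3, ZMod.intCast_zmod_eq_zero_iff_dvd]
    omega
  have h9 := aux_mod9 (W : ZMod 9) (X : ZMod 9) (Y : ZMod 9) (Z : ZMod 9) e9 (by
    rintro ⟨ha, hb, hc⟩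
    have := hco 3 ((hcast9 X).mp ha) ((hcast9 Y).mp hb) ((hcast9 Z).mp hc)
    norm_num at this)
  obtain ⟨hy9, hz9, hx9⟩ := h9
  have h3Y : (3 : ℤ) ∣ Y := (hcast9 Y).mp hy9
  have h3Z : (3 : ℤ) ∣ Z := (hcast9 Z).mp hz9
  have h3X : ¬ (3 : ℤ) ∣ X := fun h => hx9 ((hcast9 X).mpr h)
  -- the quadratic forms
  set m : ℤ := 3 * X ^ 2 + 2 * Y ^ 2 + 3 * Z ^ 2 with hm
  set n : ℤ := -33 * X ^ 2 - 8 * Y ^ 2 + 27 * Z ^ 2 with hn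
  set L : ℤ := -3 * X ^ 2 + 5 * Y ^ 2 + Z ^ 2 with hL
  have key : m * n = W ^ 2 + 3 * L ^ 2 := by
    rw [hm, hn, hL]
    linear_combination -heq
  have hX0 : X ≠ 0 := by rintro rfl; exact h2X ⟨0, rfl⟩
  have hX2pos : 0 < X ^ 2 :=
    lt_of_le_of_ne (sq_nonneg X) (Ne.symm (pow_ne_zero 2 hX0))
  have hm_pos : 0 < m := by rw [hm]; nlinarith [sq_nonneg Y, sq_nonneg Z]
  have hL0 : L ≠ 0 := by rw [hL]; exact aux_L_ne X Y Z hco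
  have hL2pos : 0 < L ^ 2 :=
    lt_of_le_of_ne (sq_nonneg L) (Ne.symm (pow_ne_zero 2 hL0))
  have hWL : 0 < W ^ 2 + 3 * L ^ 2 := by nlinarith [sq_nonneg W]
  have hn_pos : 0 < n := by
    have hmn : 0 < m * n := by rw [key]; exact hWL
    rcases mul_pos_iff.mp hmn with ⟨_, h⟩ | ⟨h, _⟩
    · exact h
    · linarith
  have hM0 : m.natAbs ≠ 0 := Int.natAbs_ne_zero.mpr hm_pos.ne'
  have hN0 : n.natAbs ≠ 0 := Int.natAbs_ne_zero.mpr hn_pos.ne'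
  -- every prime p ≡ 2 mod 3, p ≠ 2 divides m to an even power
  have hpEven : ∀ p : ℕ, p.Prime → p ≠ 2 → p % 3 = 2 →
      Even (m.natAbs.factorization p) := by
    intro p pp hp2 hp3
    by_contra hodd
    have hprod : m.natAbs * n.natAbs = (W ^ 2 + 3 * L ^ 2).natAbs := by
      rw [← Int.natAbs_mul, key]
    have hEprod : Even ((m.natAbs * n.natAbs).factorization p) := by
      rw [hprod]
      exact aux_even_factorization p pp hp2 hp3 _ W L (ne_of_gt hWL) rfl
    rw [Nat.factorization_mul hM0 hN0, Finsupp.add_apply, Nat.even_add] at hEprod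
    have hoddn : ¬ Even (n.natAbs.factorization p) := fun h => hodd (hEprod.mpr h)
    have hm1 : m.natAbs.factorization p ≠ 0 := fun h => hodd (h ▸ Even.zero)
    have hn1 : n.natAbs.factorization p ≠ 0 := fun h => hoddn (h ▸ Even.zero)
    have hpm : (p : ℤ) ∣ m := Int.dvd_natAbs.mp
      (Int.natCast_dvd_natCast.mpr (Nat.dvd_of_factorization_pos hm1))
    have hpn : (p : ℤ) ∣ n := Int.dvd_natAbs.mp
      (Int.natCast_dvd_natCast.mpr (Nat.dvd_of_factorization_pos hn1))
    have hpWL : (p : ℤ) ∣ W ^ 2 + 3 * L ^ 2 := key ▸ hpm.mul_right n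
    obtain ⟨hpW, hpL⟩ := aux_dvd_of_dvd p pp hp2 hp3 W L hpWL
    have idx : 1092 * X ^ 2 = 143 * m - 78 * L - 13 * n := by rw [hm, hn, hL]; ring
    have idy : 1092 * Y ^ 2 = 48 * m + 180 * L - 12 * n := by rw [hm, hn, hL]; ring
    have idz : 1092 * Z ^ 2 = 189 * m - 42 * L + 21 * n := by rw [hm, hn, hL]; ring
    have hPZ : Prime (p : ℤ) := Nat.prime_iff_prime_int.mp pp
    have hnd : ¬ (p : ℤ) ∣ 1092 := by
      intro hd
      have hdn : p ∣ 1092 := by exact_mod_cast hd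
      have h1 : p ∣ 2 * 546 := by norm_num; exact_mod_cast hdn
      rcases (Nat.Prime.dvd_mul pp).mp h1 with h | h
      · exact hp2 ((Nat.prime_dvd_prime_iff_eq pp Nat.prime_two).mp h)
      have h2 : p ∣ 2 * 273 := by norm_num; exact h
      rcases (Nat.Prime.dvd_mul pp).mp h2 with h | h
      · exact hp2 ((Nat.prime_dvd_prime_iff_eq pp Nat.prime_two).mp h)
      have h3 : p ∣ 3 * 91 := by norm_num; exact h
      rcases (Nat.Prime.dvd_mul pp).mp h3 with h | h
      · have := (Nat.prime_dvd_prime_iff_eq pp Nat.prime_three).mp h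
        rw [this] at hp3; norm_num at hp3
      have h4 : p ∣ 7 * 13 := by norm_num; exact h
      rcases (Nat.Prime.dvd_mul pp).mp h4 with h | h
      · have : p = 7 := (Nat.prime_dvd_prime_iff_eq pp (by norm_num)).mp h
        rw [this] at hp3; norm_num at hp3
      · have : p = 13 := (Nat.prime_dvd_prime_iff_eq pp (by norm_num)).mp h
        rw [this] at hp3; norm_num at hp3
    have hdX : (p : ℤ) ∣ X := by
      have : (p : ℤ) ∣ 1092 * X ^ 2 := by
        rw [idx]
        exact dvd_sub (dvd_sub (hpm.mul_left 143) (hpL.mul_left 78)) (hpn.mul_left 13)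
      exact hPZ.dvd_of_dvd_pow ((hPZ.dvd_mul.mp this).resolve_left hnd)
    have hdY : (p : ℤ) ∣ Y := by
      have : (p : ℤ) ∣ 1092 * Y ^ 2 := by
        rw [idy]
        exact dvd_sub (dvd_add (hpm.mul_left 48) (hpL.mul_left 180)) (hpn.mul_left 12)
      exact hPZ.dvd_of_dvd_pow ((hPZ.dvd_mul.mp this).resolve_left hnd)
    have hdZ : (p : ℤ) ∣ Z := by
      have : (p : ℤ) ∣ 1092 * Z ^ 2 := by
        rw [idz]
        exact dvd_add (dvd_sub (hpm.mul_left 189) (hpL.mul_left 42)) (hpn.mul_left 21)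
      exact hPZ.dvd_of_dvd_pow ((hPZ.dvd_mul.mp this).resolve_left hnd)
    have := Int.le_of_dvd one_pos (hco (p : ℤ) hdX hdY hdZ)
    have := pp.two_le
    omega
  -- congruence information on m
  have h4m : m % 4 = 2 := by
    obtain ⟨a, ha⟩ : ∃ a, X = 2 * a + 1 := ⟨X / 2, by omega⟩
    obtain ⟨c, hc⟩ : ∃ c, Z = 2 * c + 1 := ⟨Z / 2, by omega⟩
    obtain ⟨b, hb⟩ : ∃ b, Y = 2 * b := ⟨Y / 2, by omega⟩
    have : m = 4 * (3 * a ^ 2 + 3 * a + 2 * b ^ 2 + 3 * c ^ 2 + 3 * c + 1) + 2 := by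
      rw [hm, ha, hb, hc]; ring
    omega
  have h9m : m % 9 = 3 := by
    obtain ⟨b, hb⟩ : ∃ b, Y = 3 * b := ⟨Y / 3, by omega⟩
    obtain ⟨c, hc⟩ : ∃ c, Z = 3 * c := ⟨Z / 3, by omega⟩
    obtain ⟨a, ha⟩ : ∃ a, X = 3 * a + 1 ∨ X = 3 * a + 2 := ⟨X / 3, by omega⟩
    rcases ha with ha | ha
    · have : m = 9 * (3 * a ^ 2 + 2 * a + 2 * b ^ 2 + 3 * c ^ 2) + 3 := by
        rw [hm, ha, hb, hc]; ring
      omega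
    · have : m = 9 * (3 * a ^ 2 + 4 * a + 2 * b ^ 2 + 3 * c ^ 2 + 1) + 3 := by
        rw [hm, ha, hb, hc]; ring
      omega
  obtain ⟨t, ht, htpos, ht2, ht3⟩ := aux_t m hm_pos h4m h9m
  set T : ℕ := t.natAbs with hT
  obtain ⟨hT0, hT3, hT2⟩ := aux_T t htpos ht2 ht3
  have hMT : m.natAbs = 6 * T := by
    rw [ht, Int.natAbs_mul]
    norm_num
    rfl
  have hfT : ∀ q : ℕ, q.Prime → q % 3 = 2 → Even (T.factorization q) := by
    intro q pq hq
    by_cases hq2 : q = 2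
    · rw [hq2, Nat.factorization_eq_zero_of_not_dvd hT2]
      exact Even.zero
    · have hEm := hpEven q pq hq2 hq
      rw [hMT, Nat.factorization_mul (by norm_num) hT0, Finsupp.add_apply] at hEm
      have h6 : (6 : ℕ).factorization q = 0 := by
        apply Nat.factorization_eq_zero_of_not_dvd
        intro hd
        rcases (Nat.Prime.dvd_mul pq).mp (show q ∣ 2 * 3 from hd) with h | h
        · exact hq2 ((Nat.prime_dvd_prime_iff_eq pq Nat.prime_two).mp h)
        · have := (Nat.prime_dvd_prime_iff_eq pq Nat.prime_three).mp h
          rw [this] at hq; norm_num at hq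
      rw [h6, zero_add] at hEm
      exact hEm
  exact aux_T2 t htpos ht3 (aux_one_mod_three T hT0 hT3 hfT)


/-- The equation `w² = -126·x⁴ + -91·y⁴ + 78·z⁴` has no rational solution with
`(x, y, z) ≠ (0, 0, 0)`. -/
theorem no_rational_points_case_13 :
    ¬ ∃ w x y z : ℚ, w ^ 2 = (-126) * x ^ 4 + (-91) * y ^ 4 + (78) * z ^ 4 ∧
      (x, y, z) ≠ (0, 0, 0) := by
  rintro ⟨w, x, y, z, heq, hne⟩
  have hne' : ¬(x = 0 ∧ y = 0 ∧ z = 0) := by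
    rintro ⟨h1, h2, h3⟩
    exact hne (by rw [h1, h2, h3])
  obtain ⟨W₀, X₀, Y₀, Z₀, hne0, heq0⟩ :
      ∃ W X Y Z : ℤ, ¬(X = 0 ∧ Y = 0 ∧ Z = 0) ∧
        W ^ 2 = -126 * X ^ 4 + -91 * Y ^ 4 + 78 * Z ^ 4 := by
    set X : ℤ := x.num * y.den * z.den with hX
    set Y : ℤ := y.num * x.den * z.den with hY
    set Z : ℤ := z.num * x.den * y.den with hZ
    set D : ℚ := (x.den : ℚ) * (y.den : ℚ) * (z.den : ℚ) with hD
    have hxden : ((x.den : ℚ)) ≠ 0 := Nat.cast_ne_zero.mpr x.den_nz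
    have hyden : ((y.den : ℚ)) ≠ 0 := Nat.cast_ne_zero.mpr y.den_nz
    have hzden : ((z.den : ℚ)) ≠ 0 := Nat.cast_ne_zero.mpr z.den_nz
    have hxd : (x.den : ℤ) ≠ 0 := Int.natCast_ne_zero.mpr x.den_nz
    have hyd : (y.den : ℤ) ≠ 0 := Int.natCast_ne_zero.mpr y.den_nz
    have hzd : (z.den : ℤ) ≠ 0 := Int.natCast_ne_zero.mpr z.den_nz
    have hx1 : x * (x.den : ℚ) = (x.num : ℚ) := by rw [mul_comm, Rat.den_mul_eq_num]
    have hy1 : y * (y.den : ℚ) = (y.num : ℚ) := by rw [mul_comm, Rat.den_mul_eq_num]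
    have hz1 : z * (z.den : ℚ) = (z.num : ℚ) := by rw [mul_comm, Rat.den_mul_eq_num]
    have hxq : (X : ℚ) = x * D := by
      rw [hX, hD]
      push_cast
      rw [← hx1]
      ring
    have hyq : (Y : ℚ) = y * D := by
      rw [hY, hD]
      push_cast
      rw [← hy1]
      ring
    have hzq : (Z : ℚ) = z * D := by
      rw [hZ, hD]
      push_cast
      rw [← hz1]
      ring
    set R : ℤ := -126 * X ^ 4 + -91 * Y ^ 4 + 78 * Z ^ 4 with hR
    have hWq : (w * D ^ 2) ^ 2 = ((R : ℤ) : ℚ) := by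
      have hcast : ((R : ℤ) : ℚ) = -126 * (X : ℚ) ^ 4 + -91 * (Y : ℚ) ^ 4
          + 78 * (Z : ℚ) ^ 4 := by
        rw [hR]; push_cast; ring
      rw [hcast, hxq, hyq, hzq]
      linear_combination D ^ 4 * heq
    have hden : (w * D ^ 2).den = 1 := by
      have h2 : ((w * D ^ 2) * (w * D ^ 2)).den = 1 := by
        rw [show (w * D ^ 2) * (w * D ^ 2) = (w * D ^ 2) ^ 2 by ring, hWq, Rat.den_intCast]
      have h3 := Rat.mul_self_den (w * D ^ 2)
      rw [h2] at h3
      exact Nat.eq_one_of_mul_eq_one_right h3.symm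
    have hWint : (((w * D ^ 2).num : ℤ) : ℚ) = w * D ^ 2 :=
      Rat.coe_int_num_of_den_eq_one hden
    refine ⟨(w * D ^ 2).num, X, Y, Z, ?_, ?_⟩
    · rintro ⟨h1, h2, h3⟩
      rw [hX] at h1; rw [hY] at h2; rw [hZ] at h3
      simp only [mul_eq_zero] at h1 h2 h3
      apply hne'
      refine ⟨Rat.num_eq_zero.mp ?_, Rat.num_eq_zero.mp ?_, Rat.num_eq_zero.mp ?_⟩ <;> tauto
    · have : (((w * D ^ 2).num : ℤ) : ℚ) ^ 2 = ((R : ℤ) : ℚ) := by rw [hWint]; exact hWq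
      have h4 : ((w * D ^ 2).num) ^ 2 = R := by exact_mod_cast this
      rw [hR] at h4
      exact h4
  obtain ⟨W, X, Y, Z, hg, heqZ⟩ := aux_descent _ W₀ X₀ Y₀ Z₀ rfl hne0 heq0
  exact aux_main W X Y Z hg heqZ
end

section
/- The equation w² = 34·x⁴ + 34·y⁴ + 34·z⁴ has no solution (w, x, y, z) ∈ ℚ⁴ with (x, y, z) ≠ (0, 0, 0). -/
/-!
Clearing denominators and common factors turns a rational point into a primitive integral
solution of `x⁴ + y⁴ + z⁴ = 34 r²`. Put `N = x² + (y - z)²`. The identities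
`N (x² - (y + z)²) = 2 ((x² - yz)² - 17 r²)` and `N ((y - z)² - x²) = 2 ((y² + z² - yz)² - 17 r²)`
show that `N` has even valuation at every odd prime `q` modulo which `17` is not a square:
values of `a² - 17 b²` have even valuation there, and `q` cannot divide `N` and both cofactors
without dividing `x`, `y` and `z`. Since `17 ≡ 1 mod 8`, quadratic reciprocity then makes `N` a
square modulo `17`, and so are its two cyclic shifts. A finite check modulo `17` shows that this
is impossible when `x⁴ + y⁴ + z⁴ ≡ 0` and `x, y, z` are not all divisible by `17`.
-/

theorem ZMod.isSquare_natCast_of_even_padicValNat {p : ℕ} [Fact p.Prime] (hp : p % 8 = 1)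
    {n : ℕ} (h : ∀ q, q.Prime → q ≠ 2 → ¬IsSquare (p : ZMod q) → Even (padicValNat q n)) :
    IsSquare (n : ZMod p) := by
  induction n using Nat.recOnPrimePow with
  | zero => simp
  | one => simp
  | prime_pow_mul a q k hq hqa hk ih =>
    have := Fact.mk hq
    have ha : a ≠ 0 := by rintro rfl; exact hqa (dvd_zero q)
    rw [Nat.cast_mul, Nat.cast_pow]
    refine IsSquare.mul ?_ (ih fun r hr hr2 hrp => ?_)
    · rcases eq_or_ne q 2 with rfl | hq2
      · exact ((ZMod.exists_sq_eq_two_iff (by omega)).2 (Or.inl hp)).pow k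
      by_cases hpq : IsSquare (p : ZMod q)
      · exact ((ZMod.exists_sq_eq_prime_iff_of_mod_four_eq_one (by omega) hq2).2 hpq).pow k
      · have hk := h q hq hq2 hpq
        rw [padicValNat.mul (pow_ne_zero k hq.ne_zero) ha, padicValNat.prime_pow,
          padicValNat.eq_zero_of_not_dvd hqa, add_zero] at hk
        exact hk.isSquare_pow _
    · have hra := h r hr hr2 hrp
      have := Fact.mk hr
      rcases eq_or_ne r q with rfl | hrq
      · simp [padicValNat.eq_zero_of_not_dvd hqa]
      · have hrq' : ¬r ∣ q ^ k := fun hd =>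
          hrq ((Nat.prime_dvd_prime_iff_eq hr hq).1 (hr.dvd_of_dvd_pow hd))
        rwa [padicValNat.mul (pow_ne_zero k hq.ne_zero) ha, padicValNat.eq_zero_of_not_dvd hrq',
          zero_add] at hra

theorem ZMod.isSquare_intCast_of_even_padicValInt {p : ℕ} [Fact p.Prime] (hp : p % 8 = 1)
    {N : ℤ} (h : ∀ q, q.Prime → q ≠ 2 → ¬IsSquare (p : ZMod q) → Even (padicValInt q N)) :
    IsSquare (N : ZMod p) := by
  have hN := isSquare_natCast_of_even_padicValNat hp h
  rcases Int.natAbs_eq N with hN' | hN' <;> rw [hN']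
  · rwa [Int.cast_natCast]
  · have hneg : IsSquare (-1 : ZMod p) := ZMod.exists_sq_eq_neg_one_iff.2 (by omega)
    rw [Int.cast_neg, Int.cast_natCast, ← neg_one_mul]
    exact hneg.mul hN

section NonsquareNorms

variable {q : ℕ} [Fact q.Prime] {d : ℤ}

theorem dvd_and_dvd_of_dvd_sq_sub_mul_sq (hd : ¬IsSquare (d : ZMod q)) {a b : ℤ}
    (h : (q : ℤ) ∣ a ^ 2 - d * b ^ 2) : (q : ℤ) ∣ a ∧ (q : ℤ) ∣ b := by
  simp only [← ZMod.intCast_zmod_eq_zero_iff_dvd] at h ⊢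
  push_cast at h
  have hb : (b : ZMod q) = 0 := by
    by_contra hb
    exact hd ⟨a / b, by field_simp; linear_combination -h⟩
  rw [hb] at h
  exact ⟨pow_eq_zero_iff two_ne_zero |>.1 (by simpa using h), hb⟩

theorem even_padicValInt_sq_sub_mul_sq (hd : ¬IsSquare (d : ZMod q)) (a b : ℤ) :
    Even (padicValInt q (a ^ 2 - d * b ^ 2)) := by
  obtain ⟨n, hn⟩ : ∃ n, padicValInt q (a ^ 2 - d * b ^ 2) = n := ⟨_, rfl⟩
  induction n using Nat.strong_induction_on generalizing a b with
  | _ n ih =>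
  by_cases hq : (q : ℤ) ∣ a ^ 2 - d * b ^ 2
  · by_cases h0 : a ^ 2 - d * b ^ 2 = 0
    · simp [h0]
    obtain ⟨⟨a, rfl⟩, ⟨b, rfl⟩⟩ := dvd_and_dvd_of_dvd_sq_sub_mul_sq hd hq
    have hfactor : (q * a) ^ 2 - d * (q * b) ^ 2 = ((q ^ 2 : ℕ) : ℤ) * (a ^ 2 - d * b ^ 2) := by
      push_cast; ring
    rw [hfactor] at h0 hn ⊢
    rw [padicValInt.mul (left_ne_zero_of_mul h0) (right_ne_zero_of_mul h0), padicValInt.of_nat,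
      padicValNat.prime_pow] at hn ⊢
    exact even_two.add (ih _ (by omega) a b rfl)
  · simp [padicValInt.eq_zero_of_not_dvd hq]

theorem dvd_of_mul_eq_two_mul_sq_sub_mul_sq (hq2 : q ≠ 2) (hd : ¬IsSquare (d : ZMod q))
    {N R a b : ℤ} (h : N * R = 2 * (a ^ 2 - d * b ^ 2)) (hN : Odd (padicValInt q N)) :
    (q : ℤ) ∣ R := by
  rcases eq_or_ne R 0 with rfl | hR
  · exact dvd_zero _
  have hN0 : N ≠ 0 := by rintro rfl; simp at hN
  have hX : a ^ 2 - d * b ^ 2 ≠ 0 := by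
    rintro h0; rw [h0, mul_zero] at h; exact mul_ne_zero hN0 hR h
  have hq2' : ¬(q : ℤ) ∣ 2 := fun hd =>
    hq2 ((Nat.prime_dvd_prime_iff_eq Fact.out Nat.prime_two).1 (by exact_mod_cast hd))
  have hv := congrArg (padicValInt q) h
  rw [padicValInt.mul hN0 hR, padicValInt.mul two_ne_zero hX,
    padicValInt.eq_zero_of_not_dvd hq2', zero_add] at hv
  obtain ⟨k, hk⟩ := hN
  obtain ⟨m, hm⟩ := even_padicValInt_sq_sub_mul_sq hd a b
  simpa using (padicValInt_dvd_iff 1 R).2 (Or.inr (by omega))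

end NonsquareNorms

theorem eq_zero_of_sq_add_sq_sub_eq_zero {K : Type*} [Field K] (h2 : (2 : K) ≠ 0) {x y z : K}
    (hN : x ^ 2 + (y - z) ^ 2 = 0) (hR₁ : x ^ 2 - (y + z) ^ 2 = 0)
    (hR₂ : (y - z) ^ 2 - x ^ 2 = 0) : x = 0 ∧ y = 0 ∧ z = 0 := by
  have hx : x = 0 := by
    have : 2 * x ^ 2 = 0 := by linear_combination hN - hR₂
    simpa [h2] using this
  subst hx
  have hsub : y - z = 0 := by simpa using hN
  have hadd : y + z = 0 := by simpa using hR₁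
  have hy : 2 * y = 0 := by linear_combination hadd + hsub
  have hy : y = 0 := by simpa [h2] using hy
  exact ⟨rfl, hy, by linear_combination hadd - hy⟩

def IsPrimitive (x y z : ℤ) : Prop :=
  ∀ p : ℕ, p.Prime → ¬((p : ℤ) ∣ x ∧ (p : ℤ) ∣ y ∧ (p : ℤ) ∣ z)

theorem IsPrimitive.rotate {x y z : ℤ} (h : IsPrimitive x y z) : IsPrimitive y z x :=
  fun p hp ⟨hy, hz, hx⟩ => h p hp ⟨hx, hy, hz⟩

theorem exists_int_sq_eq_of_rat (A B C : ℤ) {w x y z : ℚ}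
    (h : w ^ 2 = A * x ^ 4 + B * y ^ 4 + C * z ^ 4) (hne : (x, y, z) ≠ (0, 0, 0)) :
    ∃ W X Y Z : ℤ, W ^ 2 = A * X ^ 4 + B * Y ^ 4 + C * Z ^ 4 ∧ (X, Y, Z) ≠ (0, 0, 0) := by
  set D : ℚ := x.den * y.den * z.den
  have hD : D ≠ 0 := by positivity
  have hX : ((x.num * (y.den * z.den) : ℤ) : ℚ) = x * D := by
    push_cast; rw [← Rat.mul_den_eq_num]; ring
  have hY : ((y.num * (x.den * z.den) : ℤ) : ℚ) = y * D := by
    push_cast; rw [← Rat.mul_den_eq_num]; ring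
  have hZ : ((z.num * (x.den * y.den) : ℤ) : ℚ) = z * D := by
    push_cast; rw [← Rat.mul_den_eq_num]; ring
  set X := x.num * (y.den * z.den)
  set Y := y.num * (x.den * z.den)
  set Z := z.num * (x.den * y.den)
  have hsq : IsSquare ((A * X ^ 4 + B * Y ^ 4 + C * Z ^ 4 : ℤ) : ℚ) :=
    ⟨w * D ^ 2, by push_cast; rw [hX, hY, hZ]; linear_combination (-D ^ 4) * h⟩
  obtain ⟨W, hW⟩ := Rat.isSquare_intCast_iff.1 hsq
  refine ⟨W, X, Y, Z, by rw [hW]; ring, fun h0 => hne ?_⟩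
  simp only [Prod.mk.injEq] at h0 ⊢
  obtain ⟨hX0, hY0, hZ0⟩ := h0
  simp only [hX0, hY0, hZ0, Int.cast_zero, zero_eq_mul, hD, or_false] at hX hY hZ
  exact ⟨hX, hY, hZ⟩

theorem exists_isPrimitive_of_sq_eq (A B C : ℤ) {W X Y Z : ℤ}
    (h : W ^ 2 = A * X ^ 4 + B * Y ^ 4 + C * Z ^ 4) (hne : (X, Y, Z) ≠ (0, 0, 0)) :
    ∃ W X Y Z : ℤ, W ^ 2 = A * X ^ 4 + B * Y ^ 4 + C * Z ^ 4 ∧ IsPrimitive X Y Z := by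
  obtain ⟨n, hn⟩ : ∃ n, X.natAbs + Y.natAbs + Z.natAbs = n := ⟨_, rfl⟩
  induction n using Nat.strong_induction_on generalizing W X Y Z with
  | _ n ih =>
  by_cases hprim : IsPrimitive X Y Z
  · exact ⟨W, X, Y, Z, h, hprim⟩
  simp only [IsPrimitive, not_forall, not_not] at hprim
  obtain ⟨p, hp, ⟨X, rfl⟩, ⟨Y, rfl⟩, ⟨Z, rfl⟩⟩ := hprim
  have hp0 : (p : ℤ) ≠ 0 := by exact_mod_cast hp.ne_zero
  obtain ⟨W, rfl⟩ : (p : ℤ) ^ 2 ∣ W := by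
    rw [← Int.pow_dvd_pow_iff two_ne_zero, h]
    exact ⟨A * X ^ 4 + B * Y ^ 4 + C * Z ^ 4, by ring⟩
  have h' : W ^ 2 = A * X ^ 4 + B * Y ^ 4 + C * Z ^ 4 :=
    mul_left_cancel₀ (pow_ne_zero 4 hp0) (by linear_combination h)
  have hne' : (X, Y, Z) ≠ (0, 0, 0) := by
    rintro ⟨⟩; simp at hne
  have hpos : 0 < X.natAbs + Y.natAbs + Z.natAbs := by
    by_contra h0
    exact hne' (by simp_all)
  refine ih _ ?_ h' hne' rfl
  rw [← hn, Int.natAbs_mul, Int.natAbs_mul, Int.natAbs_mul, Int.natAbs_natCast]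
  nlinarith [hp.two_le]

theorem exists_eq_mul_sq_of_sq_eq_mul {k W S : ℤ} (hk : Squarefree k) (h : W ^ 2 = k * S) :
    ∃ r, S = k * r ^ 2 := by
  obtain ⟨r, rfl⟩ : k ∣ W := (hk.dvd_pow_iff_dvd two_ne_zero).1 ⟨S, h⟩
  have hk0 : k ≠ 0 := by rintro rfl; exact not_squarefree_zero hk
  exact ⟨r, mul_left_cancel₀ hk0 (by linear_combination -h)⟩

theorem squarefree_thirtyFour : Squarefree (34 : ℤ) :=
  Int.squarefree_natCast.2 <| (Nat.squarefree_mul_iff (m := 2) (n := 17)).2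
    ⟨by norm_num, Nat.prime_two.prime.squarefree, (by norm_num : Nat.Prime 17).prime.squarefree⟩

section FourthPowers

variable {x y z r : ℤ}

theorem even_padicValInt_sq_add_sq_sub (hE : x ^ 4 + y ^ 4 + z ^ 4 = 34 * r ^ 2)
    (hprim : IsPrimitive x y z) {q : ℕ} [Fact q.Prime] (hq2 : q ≠ 2)
    (h17 : ¬IsSquare (17 : ZMod q)) : Even (padicValInt q (x ^ 2 + (y - z) ^ 2)) := by
  by_contra hodd
  rw [Nat.not_even_iff_odd] at hodd
  have hd : ¬IsSquare ((17 : ℤ) : ZMod q) := by simpa using h17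
  have hN : (q : ℤ) ∣ x ^ 2 + (y - z) ^ 2 := by
    simpa using (padicValInt_dvd_iff 1 _).2 (Or.inr hodd.pos)
  have hR₁ : (q : ℤ) ∣ x ^ 2 - (y + z) ^ 2 :=
    dvd_of_mul_eq_two_mul_sq_sub_mul_sq hq2 hd (a := x ^ 2 - y * z) (b := r)
      (by linear_combination -hE) hodd
  have hR₂ : (q : ℤ) ∣ (y - z) ^ 2 - x ^ 2 :=
    dvd_of_mul_eq_two_mul_sq_sub_mul_sq hq2 hd (a := y ^ 2 + z ^ 2 - y * z) (b := r)
      (by linear_combination -hE) hodd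
  simp only [← ZMod.intCast_zmod_eq_zero_iff_dvd] at hN hR₁ hR₂
  push_cast at hN hR₁ hR₂
  have h2 : (2 : ZMod q) ≠ 0 := Ring.two_ne_zero (by rwa [ZMod.ringChar_zmod_n])
  obtain ⟨hx, hy, hz⟩ := eq_zero_of_sq_add_sq_sub_eq_zero h2 hN hR₁ hR₂
  simp only [ZMod.intCast_zmod_eq_zero_iff_dvd] at hx hy hz
  exact hprim q Fact.out ⟨hx, hy, hz⟩

theorem isSquare_sq_add_sq_sub (hE : x ^ 4 + y ^ 4 + z ^ 4 = 34 * r ^ 2)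
    (hprim : IsPrimitive x y z) : IsSquare ((x ^ 2 + (y - z) ^ 2 : ℤ) : ZMod 17) := by
  have : Fact (Nat.Prime 17) := ⟨by norm_num⟩
  refine ZMod.isSquare_intCast_of_even_padicValInt (p := 17) (by norm_num) fun q hq hq2 h17 => ?_
  have := Fact.mk hq
  exact even_padicValInt_sq_add_sq_sub hE hprim hq2 (by simpa using h17)

theorem exists_not_isSquare_mod_seventeen : ∀ a b c : ZMod 17, a ^ 4 + b ^ 4 + c ^ 4 = 0 →
    (a, b, c) ≠ (0, 0, 0) → ¬IsSquare (a ^ 2 + (b - c) ^ 2) ∨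
      ¬IsSquare (b ^ 2 + (c - a) ^ 2) ∨ ¬IsSquare (c ^ 2 + (a - b) ^ 2) := by
  decide

theorem fourth_powers_ne_thirtyFour_mul_sq (hprim : IsPrimitive x y z) :
    x ^ 4 + y ^ 4 + z ^ 4 ≠ 34 * r ^ 2 := by
  intro hE
  have hmod : (x : ZMod 17) ^ 4 + (y : ZMod 17) ^ 4 + (z : ZMod 17) ^ 4 = 0 := by
    have := congrArg (Int.cast : ℤ → ZMod 17) hE
    push_cast at this
    rw [this, show (34 : ZMod 17) = 0 from rfl, zero_mul]
  have hne : ((x : ZMod 17), (y : ZMod 17), (z : ZMod 17)) ≠ (0, 0, 0) := by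
    simp only [ne_eq, Prod.mk.injEq, ZMod.intCast_zmod_eq_zero_iff_dvd]
    exact hprim 17 (by norm_num)
  have hsq := isSquare_sq_add_sq_sub hE hprim
  have hsq' := isSquare_sq_add_sq_sub (r := r) (by linear_combination hE) hprim.rotate
  have hsq'' := isSquare_sq_add_sq_sub (r := r) (by linear_combination hE) hprim.rotate.rotate
  push_cast at hsq hsq' hsq''
  rcases exists_not_isSquare_mod_seventeen _ _ _ hmod hne with h | h | h
  exacts [h hsq, h hsq', h hsq'']

end FourthPowers

/-- The equation `w² = 34·x⁴ + 34·y⁴ + 34·z⁴` has no rational solution with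
`(x, y, z) ≠ (0, 0, 0)`. -/
theorem no_rational_points_case_14 :
    ¬ ∃ w x y z : ℚ, w ^ 2 = (34) * x ^ 4 + (34) * y ^ 4 + (34) * z ^ 4 ∧
      (x, y, z) ≠ (0, 0, 0) := by
  rintro ⟨w, x, y, z, h, hne⟩
  obtain ⟨W, X, Y, Z, hW, hne⟩ := exists_int_sq_eq_of_rat 34 34 34 (by exact_mod_cast h) hne
  obtain ⟨W, X, Y, Z, hW, hprim⟩ := exists_isPrimitive_of_sq_eq 34 34 34 hW hne
  obtain ⟨r, hr⟩ := exists_eq_mul_sq_of_sq_eq_mul squarefree_thirtyFour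
    (W := W) (S := X ^ 4 + Y ^ 4 + Z ^ 4) (by linear_combination hW)
  exact fourth_powers_ne_thirtyFour_mul_sq hprim hr
end

section
/- Let n, m ≥ 1 and let G be the abelian group (ℤ/n) × (ℤ/m), written multiplicatively, with g and h generators of the two factors. In the integral group ring R = ℤ[G], set Δ_g = 1 − g, Δ_h = 1 − h, N_g = 1 + g + ⋯ + g^(n−1), N_h = 1 + h + ⋯ + h^(m−1), and let ε : R → ℤ be the augmentation map sending every group element to 1. Define D : R² → R by D(x, y) = Δ_g·x + Δ_h·y and A : R³ → R² by A(x, y, z) = (N_g·x + Δ_h·y, −Δ_g·y + N_h·z). Then the sequence R³ → R² → R → ℤ → 0 is exact: ε is surjective, the kernel of ε equals the image of D, and the kernel of D equals the image of A. -/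
noncomputable section

/-- The bicyclic group `(ℤ/n) × (ℤ/m)`, written multiplicatively. -/
abbrev BicyclicGroup (n m : ℕ) := Multiplicative (ZMod n × ZMod m)

/-- The integral group ring `ℤ[(ℤ/n) × (ℤ/m)]`. -/
abbrev BicyclicGroupRing (n m : ℕ) := MonoidAlgebra ℤ (BicyclicGroup n m)

/-- The generator `g` of the first factor, as an element of the group ring. -/
def bicyclicG (n m : ℕ) : BicyclicGroupRing n m :=
  MonoidAlgebra.of ℤ (BicyclicGroup n m) (Multiplicative.ofAdd (1, 0))

/-- The generator `h` of the second factor, as an element of the group ring. -/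
def bicyclicH (n m : ℕ) : BicyclicGroupRing n m :=
  MonoidAlgebra.of ℤ (BicyclicGroup n m) (Multiplicative.ofAdd (0, 1))

/-- The norm element `N_g = 1 + g + ⋯ + g^(n−1)`. -/
def bicyclicNg (n m : ℕ) : BicyclicGroupRing n m :=
  ∑ i ∈ Finset.range n, bicyclicG n m ^ i

/-- The norm element `N_h = 1 + h + ⋯ + h^(m−1)`. -/
def bicyclicNh (n m : ℕ) : BicyclicGroupRing n m :=
  ∑ i ∈ Finset.range m, bicyclicH n m ^ i

/-- The augmentation map `ε : ℤ[G] → ℤ`, sending every group element to `1`. -/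
def bicyclicAug (n m : ℕ) : BicyclicGroupRing n m →ₐ[ℤ] ℤ :=
  MonoidAlgebra.lift ℤ ℤ (BicyclicGroup n m) 1

/-!
Two facts about group rings carry the argument. A linear endomorphism `φ` of `k[G]` with
`σ - φ σ ∈ I` for every group element `σ` satisfies `x - φ x ∈ I` for all `x`; applied to
`x ↦ ε(x)·1` and to the retraction `φ_H : h ↦ 1`, this gives `ker ε = (Δ_g, Δ_h)` and
`x - φ_H(x) ∈ Δ_h·R`. And if a character `χ : G → ℤ/d` sends `u` to `1`, every `x` is
`∑_{i<d} uⁱ·(u⁻ⁱx)|_{ker χ}`, so each `u`-invariant element lies in `N_u·R`.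

Given `Δ_g y₁ + Δ_h y₂ = 0`, applying `φ_H` gives `Δ_g φ_H(y₁) = 0`, so `φ_H(y₁) = N_g s`;
writing `y₁ - φ_H(y₁) = Δ_h t` turns the relation into `Δ_h (y₂ + Δ_g t) = 0`, so
`y₂ + Δ_g t = N_h u`, and `(s, t, u)` is the required preimage.
-/

open Finset

namespace Ideal

theorem pow_sub_one_mem {R : Type*} [CommRing R] {I : Ideal R} {a : R} (ha : 1 - a ∈ I)
    (i : ℕ) : a ^ i - 1 ∈ I := by
  simpa using I.mem_of_dvd (sub_dvd_pow_sub_pow a 1 i) (by simpa using I.neg_mem ha)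

end Ideal

namespace MonoidAlgebra

variable {k G : Type*}

theorem sub_apply_mem_of_forall_of [CommRing k] [Monoid G] (φ : k[G] →ₗ[k] k[G])
    {I : Ideal k[G]} (hφ : ∀ σ, of k G σ - φ (of k G σ) ∈ I) (x : k[G]) :
    x - φ x ∈ I := by
  induction x using MonoidAlgebra.induction_linear with
  | zero => simp
  | add x y hx hy => simpa [add_sub_add_comm] using I.add_mem hx hy
  | single σ t =>
    rw [← smul_of, map_smul, ← smul_sub]
    exact I.smul_of_tower_mem t (hφ σ)

def filter [Semiring k] (p : G → Prop) [DecidablePred p] : k[G] →+ k[G] :=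
  coeffAddEquiv.symm.toAddMonoidHom.comp
    ((Finsupp.filterAddHom p).comp coeffAddEquiv.toAddMonoidHom)

theorem filter_single [Semiring k] (p : G → Prop) [DecidablePred p] (σ : G) (t : k) :
    filter p (single σ t) = if p σ then single σ t else 0 := by
  split_ifs with h
  · exact congrArg ofCoeff (Finsupp.filter_single_of_pos p h)
  · exact congrArg ofCoeff (Finsupp.filter_single_of_neg p h)

variable [Group G] {d : ℕ} [NeZero d] (χ : G →* Multiplicative (ZMod d)) {u : G}

theorem sum_pow_mul_filter_mul_eq [Semiring k] (hu : χ u = .ofAdd 1) (x : k[G]) :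
    ∑ i ∈ range d, of k G (u ^ i) * filter (χ · = 1) (of k G (u ^ i)⁻¹ * x) = x := by
  induction x using MonoidAlgebra.induction_linear with
  | zero => simp
  | add x y hx hy => simp only [mul_add, map_add, sum_add_distrib, hx, hy]
  | single σ t =>
    have key : ∀ i ∈ range d, χ ((u ^ i)⁻¹ * σ) = 1 ↔ i = (χ σ).toAdd.val := by
      intro i hi
      rw [map_mul, map_inv, map_pow, hu, inv_mul_eq_one, ← ofAdd_nsmul, nsmul_one]
      constructor
      · rintro h
        rw [← h, toAdd_ofAdd, ZMod.val_natCast_of_lt (mem_range.mp hi)]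
      · rintro rfl
        rw [ZMod.natCast_zmod_val, ofAdd_toAdd]
    calc ∑ i ∈ range d, of k G (u ^ i) * filter (χ · = 1) (of k G (u ^ i)⁻¹ * single σ t)
        = ∑ i ∈ range d, if i = (χ σ).toAdd.val then single σ t else 0 := by
          refine sum_congr rfl fun i hi => ?_
          simp only [of_apply, single_mul_single, one_mul, filter_single, key i hi]
          split_ifs <;> simp [single_mul_single]
      _ = single σ t := by simp [ZMod.val_lt]

theorem exists_geom_sum_mul_eq [Ring k] (hu : χ u = .ofAdd 1) {r : k[G]}
    (hr : (1 - of k G u) * r = 0) : ∃ s, (∑ i ∈ range d, of k G u ^ i) * s = r := by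
  have hfix : ∀ i : ℕ, of k G (u ^ i)⁻¹ * r = r := by
    have h1 : of k G u * r = r := by rwa [sub_mul, one_mul, sub_eq_zero, eq_comm] at hr
    have hpow : ∀ i : ℕ, of k G (u ^ i) * r = r := fun i => by
      induction i with
      | zero => rw [pow_zero, map_one, one_mul]
      | succ i ih => rw [pow_succ', map_mul, mul_assoc, ih, h1]
    intro i
    conv_lhs => rw [← hpow i, ← mul_assoc, ← map_mul, inv_mul_cancel, map_one, one_mul]
  refine ⟨filter (χ · = 1) r, ?_⟩
  conv_rhs => rw [← sum_pow_mul_filter_mul_eq χ hu r]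
  simp only [sum_mul, hfix, map_pow]

end MonoidAlgebra

open MonoidAlgebra

namespace BicyclicGroupRing

variable {n m : ℕ}

theorem bicyclicG_pow (i : ℕ) :
    bicyclicG n m ^ i = of ℤ (BicyclicGroup n m) (.ofAdd ((i : ZMod n), 0)) := by
  rw [bicyclicG, ← map_pow, ← ofAdd_nsmul, Prod.smul_mk, nsmul_one, smul_zero]

theorem bicyclicH_pow (j : ℕ) :
    bicyclicH n m ^ j = of ℤ (BicyclicGroup n m) (.ofAdd (0, (j : ZMod m))) := by
  rw [bicyclicH, ← map_pow, ← ofAdd_nsmul, Prod.smul_mk, nsmul_one, smul_zero]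

theorem bicyclicG_pow_self : bicyclicG n m ^ n = 1 := by
  rw [bicyclicG_pow, ZMod.natCast_self, Prod.mk_zero_zero, ofAdd_zero, map_one]

theorem bicyclicH_pow_self : bicyclicH n m ^ m = 1 := by
  rw [bicyclicH_pow, ZMod.natCast_self, Prod.mk_zero_zero, ofAdd_zero, map_one]

theorem of_eq_bicyclicG_pow_mul_bicyclicH_pow [NeZero n] [NeZero m] (σ : BicyclicGroup n m) :
    of ℤ _ σ = bicyclicG n m ^ σ.toAdd.1.val * bicyclicH n m ^ σ.toAdd.2.val := by
  rw [bicyclicG_pow, bicyclicH_pow, ← map_mul, ← ofAdd_add, Prod.mk_add_mk, add_zero, zero_add,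
    ZMod.natCast_zmod_val, ZMod.natCast_zmod_val, Prod.mk.eta, ofAdd_toAdd]

theorem bicyclicAug_of (σ : BicyclicGroup n m) : bicyclicAug n m (of ℤ _ σ) = 1 :=
  lift_of _ σ

theorem bicyclicAug_bicyclicG : bicyclicAug n m (bicyclicG n m) = 1 := bicyclicAug_of _

theorem bicyclicAug_bicyclicH : bicyclicAug n m (bicyclicH n m) = 1 := bicyclicAug_of _

theorem sub_algebraMap_bicyclicAug_mem [NeZero n] [NeZero m] (x : BicyclicGroupRing n m) :
    x - algebraMap ℤ _ (bicyclicAug n m x) ∈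
      Ideal.span {1 - bicyclicG n m, 1 - bicyclicH n m} := by
  refine sub_apply_mem_of_forall_of ((Algebra.ofId ℤ _).comp (bicyclicAug n m)).toLinearMap
    (fun σ => ?_) x
  have hg : 1 - bicyclicG n m ∈ Ideal.span {1 - bicyclicG n m, 1 - bicyclicH n m} :=
    Ideal.subset_span (Set.mem_insert _ _)
  have hh : 1 - bicyclicH n m ∈ Ideal.span {1 - bicyclicG n m, 1 - bicyclicH n m} :=
    Ideal.subset_span (Set.mem_insert_of_mem _ rfl)
  rw [AlgHom.toLinearMap_apply, AlgHom.comp_apply, bicyclicAug_of, map_one,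
    of_eq_bicyclicG_pow_mul_bicyclicH_pow]
  have hsplit (a b : BicyclicGroupRing n m) : a * b - 1 = a * (b - 1) + (a - 1) := by ring
  rw [hsplit]
  exact Ideal.add_mem _ (Ideal.mul_mem_left _ _ (Ideal.pow_sub_one_mem hh _))
    (Ideal.pow_sub_one_mem hg _)

def bicyclicKillH (n m : ℕ) : BicyclicGroupRing n m →ₐ[ℤ] BicyclicGroupRing n m :=
  mapDomainAlgHom ℤ ℤ
    ((AddMonoidHom.inl _ _).comp (AddMonoidHom.fst (ZMod n) (ZMod m))).toMultiplicative

theorem bicyclicKillH_bicyclicG : bicyclicKillH n m (bicyclicG n m) = bicyclicG n m := by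
  simp [bicyclicKillH, bicyclicG]

theorem bicyclicKillH_bicyclicH : bicyclicKillH n m (bicyclicH n m) = 1 := by
  simp [bicyclicKillH, bicyclicH, one_def, Prod.mk_zero_zero]

theorem sub_bicyclicKillH_mem [NeZero n] [NeZero m] (x : BicyclicGroupRing n m) :
    x - bicyclicKillH n m x ∈ Ideal.span {1 - bicyclicH n m} := by
  refine sub_apply_mem_of_forall_of (bicyclicKillH n m).toLinearMap (fun σ => ?_) x
  rw [AlgHom.toLinearMap_apply, of_eq_bicyclicG_pow_mul_bicyclicH_pow, map_mul, map_pow, map_pow,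
    bicyclicKillH_bicyclicG, bicyclicKillH_bicyclicH, one_pow, ← mul_sub]
  exact Ideal.mul_mem_left _ _ (Ideal.pow_sub_one_mem (Ideal.mem_span_singleton_self _) _)

theorem one_sub_bicyclicG_mul_bicyclicNg : (1 - bicyclicG n m) * bicyclicNg n m = 0 := by
  rw [bicyclicNg, mul_neg_geom_sum, bicyclicG_pow_self, sub_self]

theorem one_sub_bicyclicH_mul_bicyclicNh : (1 - bicyclicH n m) * bicyclicNh n m = 0 := by
  rw [bicyclicNh, mul_neg_geom_sum, bicyclicH_pow_self, sub_self]

theorem exists_bicyclicNg_mul_eq [NeZero n] {r : BicyclicGroupRing n m}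
    (hr : (1 - bicyclicG n m) * r = 0) : ∃ s, bicyclicNg n m * s = r :=
  exists_geom_sum_mul_eq (AddMonoidHom.fst (ZMod n) (ZMod m)).toMultiplicative rfl hr

theorem exists_bicyclicNh_mul_eq [NeZero m] {r : BicyclicGroupRing n m}
    (hr : (1 - bicyclicH n m) * r = 0) : ∃ s, bicyclicNh n m * s = r :=
  exists_geom_sum_mul_eq (AddMonoidHom.snd (ZMod n) (ZMod m)).toMultiplicative rfl hr

theorem bicyclicAug_surjective : Function.Surjective (bicyclicAug n m) :=
  fun c => ⟨algebraMap ℤ _ c, (bicyclicAug n m).commutes c⟩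

theorem bicyclicAug_eq_zero_iff [NeZero n] [NeZero m] (x : BicyclicGroupRing n m) :
    bicyclicAug n m x = 0 ↔
      ∃ y : BicyclicGroupRing n m × BicyclicGroupRing n m,
        (1 - bicyclicG n m) * y.1 + (1 - bicyclicH n m) * y.2 = x := by
  constructor
  · intro hx
    have hmem := sub_algebraMap_bicyclicAug_mem x
    rw [hx, map_zero, sub_zero, Ideal.mem_span_pair] at hmem
    obtain ⟨a, b, hab⟩ := hmem
    exact ⟨(a, b), by rw [← hab, mul_comm a, mul_comm b]⟩
  · rintro ⟨y, rfl⟩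
    simp [bicyclicAug_bicyclicG, bicyclicAug_bicyclicH]

theorem one_sub_mul_add_one_sub_mul_eq_zero_iff [NeZero n] [NeZero m]
    (y : BicyclicGroupRing n m × BicyclicGroupRing n m) :
    (1 - bicyclicG n m) * y.1 + (1 - bicyclicH n m) * y.2 = 0 ↔
      ∃ z : BicyclicGroupRing n m × BicyclicGroupRing n m × BicyclicGroupRing n m,
        (bicyclicNg n m * z.1 + (1 - bicyclicH n m) * z.2.1,
          -(1 - bicyclicG n m) * z.2.1 + bicyclicNh n m * z.2.2) = y := by
  constructor
  · intro hy
    have hkill : (1 - bicyclicG n m) * bicyclicKillH n m y.1 = 0 := by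
      simpa [bicyclicKillH_bicyclicG, bicyclicKillH_bicyclicH] using
        congrArg (bicyclicKillH n m) hy
    obtain ⟨s, hs⟩ := exists_bicyclicNg_mul_eq hkill
    obtain ⟨t, ht⟩ := Ideal.mem_span_singleton'.mp (sub_bicyclicKillH_mem y.1)
    have hh : (1 - bicyclicH n m) * (y.2 + (1 - bicyclicG n m) * t) = 0 := by
      linear_combination hy + (1 - bicyclicG n m) * ht - hkill
    obtain ⟨u, hu⟩ := exists_bicyclicNh_mul_eq hh
    refine ⟨(s, t, u), Prod.ext ?_ ?_⟩
    · linear_combination hs + ht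
    · linear_combination hu
  · rintro ⟨z, rfl⟩
    linear_combination
      z.1 * one_sub_bicyclicG_mul_bicyclicNg + z.2.2 * one_sub_bicyclicH_mul_bicyclicNh

end BicyclicGroupRing

open BicyclicGroupRing in
/-- Proposition 4.2 (ii): the tail `R³ → R² → R → ℤ → 0` of the efficient free
resolution of `ℤ` over the group ring `R = ℤ[(ℤ/n) × (ℤ/m)]` is exact, where the
maps are `A(x,y,z) = (N_g·x + Δ_h·y, −Δ_g·y + N_h·z)`, `D(x,y) = Δ_g·x + Δ_h·y`,
and the augmentation `ε`. -/
theorem bicyclic_resolution_exact (n m : ℕ) (hn : 1 ≤ n) (hm : 1 ≤ m) :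
    Function.Surjective (bicyclicAug n m) ∧
    (∀ x : BicyclicGroupRing n m,
      bicyclicAug n m x = 0 ↔
        ∃ y : BicyclicGroupRing n m × BicyclicGroupRing n m,
          (1 - bicyclicG n m) * y.1 + (1 - bicyclicH n m) * y.2 = x) ∧
    (∀ y : BicyclicGroupRing n m × BicyclicGroupRing n m,
      (1 - bicyclicG n m) * y.1 + (1 - bicyclicH n m) * y.2 = 0 ↔
        ∃ z : BicyclicGroupRing n m × BicyclicGroupRing n m × BicyclicGroupRing n m,
          (bicyclicNg n m * z.1 + (1 - bicyclicH n m) * z.2.1,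
            -(1 - bicyclicG n m) * z.2.1 + bicyclicNh n m * z.2.2) = y) := by
  have := NeZero.of_pos (Nat.succ_le_iff.mp hn)
  have := NeZero.of_pos (Nat.succ_le_iff.mp hm)
  exact ⟨bicyclicAug_surjective, bicyclicAug_eq_zero_iff,
    one_sub_mul_add_one_sub_mul_eq_zero_iff⟩

end
end

section
/- Let A, B, C be nonzero integers, let a, b, c ∈ ℂ satisfy a⁴ = A, b⁴ = B, c⁴ = C, let ζ = e^{πi/4}, and let F = ℚ(ζ, a², b/a, c/a) ⊆ ℂ. Suppose [F : ℚ] = 128. Then F/ℚ is a Galois extension, and there exist field automorphisms σ, τ, ι_a, ι_b, ι_c of F over ℚ, which together generate Gal(F/ℚ), acting on the generators as follows (where i = ζ²): σ fixes a², b/a, c/a and sends ζ to ζ⁻¹; τ fixes a², b/a, c/a and sends ζ to ζ³; ι_a fixes ζ and sends a² to −a², b/a to −i·b/a, and c/a to −i·c/a; ι_b fixes ζ, a², c/a and sends b/a to i·b/a; ι_c fixes ζ, a², b/a and sends c/a to i·c/a. -/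
/-!
`F` is generated over `ℚ` by the primitive `8`-th root of unity `ζ` and by elements whose `2`-nd
or `4`-th powers lie in `ℚ`, so it is the splitting field of
`(X⁸ - 1)(X² - A)(X⁴ - B/A)(X⁴ - C/A)`: it is Galois, with `128` automorphisms. Each automorphism
`g` is determined by its *signature* `(e, s, j, k)` in `ZMod 8`, where `g ζ = ζ ^ e`,
`g (a²) = ζ ^ s a²`, `g (b/a) = ζ ^ j b/a`, `g (c/a) = ζ ^ k c/a`; here `e` is a unit,
`2 s = 0` and `4 j = 4 k = 0`. There are exactly `4 · 2 · 4 · 4 = 128` such tuples, so every one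
of them is the signature of an automorphism, which produces `σ, τ, ι_a, ι_b, ι_c`. Signatures
compose affinely, `(e, v) (e', v') = (e e', e v' + v)`, so the `128` words
`ι_a^ε ι_b^j ι_c^k σ^p τ^q` have pairwise distinct signatures and exhaust the Galois group.
-/

open IntermediateField Polynomial

section ZModExponent

variable {M : Type*} [Monoid M] {ζ : M} {n : ℕ}

theorem pow_zmod_val_natCast (hζ : ζ ^ n = 1) (k : ℕ) : ζ ^ (k : ZMod n).val = ζ ^ k := by
  rw [ZMod.val_natCast, ← pow_eq_pow_mod k hζ]

variable [NeZero n]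

theorem pow_zmod_val_mul (hζ : ζ ^ n = 1) (a b : ZMod n) :
    ζ ^ (a * b).val = (ζ ^ a.val) ^ b.val := by
  rw [← pow_mul, ← pow_zmod_val_natCast hζ (a.val * b.val), Nat.cast_mul,
    ZMod.natCast_zmod_val, ZMod.natCast_zmod_val]

theorem pow_zmod_val_add (hζ : ζ ^ n = 1) (a b : ZMod n) :
    ζ ^ (a + b).val = ζ ^ a.val * ζ ^ b.val := by
  rw [← pow_add, ← pow_zmod_val_natCast hζ (a.val + b.val), Nat.cast_add,
    ZMod.natCast_zmod_val, ZMod.natCast_zmod_val]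

end ZModExponent

theorem IsPrimitiveRoot.exists_eq_pow_mul_of_pow_eq_pow {L : Type*} [Field L] {ζ : L}
    {n m : ℕ} [NeZero n] (hζ : IsPrimitiveRoot ζ n) (hmn : m ∣ n) {x y : L} (h : y ^ m = x ^ m) :
    ∃ k : ZMod n, (m : ZMod n) * k = 0 ∧ y = ζ ^ k.val * x := by
  have hm : m ≠ 0 := fun hm => NeZero.ne n (Nat.eq_zero_of_zero_dvd (hm ▸ hmn))
  rcases eq_or_ne x 0 with rfl | hx
  · exact ⟨0, by simp, by simpa [hm] using h⟩
  have hξm : (y / x) ^ m = 1 := by rw [div_pow, h, div_self (pow_ne_zero m hx)]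
  obtain ⟨d, rfl⟩ := hmn
  obtain ⟨i, hi, hξ⟩ := hζ.eq_pow_of_pow_eq_one (ξ := y / x) (by rw [pow_mul, hξm, one_pow])
  refine ⟨i, ?_, ?_⟩
  · rw [← Nat.cast_mul, ZMod.natCast_eq_zero_iff, ← hζ.pow_eq_one_iff_dvd, mul_comm, pow_mul,
      hξ, hξm]
  · rw [ZMod.val_natCast, Nat.mod_eq_of_lt hi, hξ, div_mul_cancel₀ y hx]

section KummerSignature

variable {K L ι : Type*} [Field K] [Field L] [Algebra K L] {n : ℕ}

def IsKummerSignature (ζ : L) (x : ι → L) (g : L ≃ₐ[K] L) (e : ZMod n) (v : ι → ZMod n) :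
    Prop :=
  g ζ = ζ ^ e.val ∧ ∀ i, g (x i) = ζ ^ (v i).val * x i

/-- When `x i ^ m i ∈ K`, the ratio `g (x i) / x i` is an `m i`-th root of unity. -/
abbrev AdmissibleKummerSignature (n : ℕ) (m : ι → ℕ) :=
  (ZMod n)ˣ × ∀ i, {s : ZMod n // (m i : ZMod n) * s = 0}

variable {ζ : L} {x : ι → L}

namespace IsKummerSignature

variable {g h : L ≃ₐ[K] L} {e e' : ZMod n} {v v' : ι → ZMod n}

theorem one (hζ : ζ ^ n = 1) : IsKummerSignature ζ x (1 : L ≃ₐ[K] L) (1 : ZMod n) 0 := by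
  refine ⟨?_, fun i => ?_⟩ <;> simp [ZMod.val_one_eq_one_mod, ← pow_eq_pow_mod 1 hζ]

theorem ext (hgen : adjoin K (insert ζ (Set.range x)) = ⊤) (hg : IsKummerSignature ζ x g e v)
    (hh : IsKummerSignature ζ x h e v) : g = h := by
  ext y
  have hy : y ∈ adjoin K (insert ζ (Set.range x)) := hgen ▸ mem_top
  induction hy using adjoin_induction with
  | mem y hy =>
    obtain rfl | ⟨i, rfl⟩ := hy
    · rw [hg.1, hh.1]
    · rw [hg.2 i, hh.2 i]
  | algebraMap r => simp
  | add y z _ _ hy hz => simp [hy, hz]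
  | inv y _ hy => simp [hy]
  | mul y z _ _ hy hz => simp [hy, hz]

variable [NeZero n]

theorem mul (hζ : ζ ^ n = 1) (hg : IsKummerSignature ζ x g e v)
    (hh : IsKummerSignature ζ x h e' v') :
    IsKummerSignature ζ x (g * h) (e * e') (e • v' + v) := by
  refine ⟨?_, fun i => ?_⟩
  · rw [AlgEquiv.mul_apply, hh.1, map_pow, hg.1, pow_zmod_val_mul hζ]
  · rw [AlgEquiv.mul_apply, hh.2 i, map_mul, map_pow, hg.1, hg.2 i, Pi.add_apply, Pi.smul_apply,
      smul_eq_mul, pow_zmod_val_add hζ, pow_zmod_val_mul hζ, mul_assoc]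

theorem pow_of_fix_root (hζ : ζ ^ n = 1) (hg : IsKummerSignature ζ x g 1 v) (k : ℕ) :
    IsKummerSignature ζ x (g ^ k) 1 (k • v) := by
  induction k with
  | zero => simpa using one hζ
  | succ k ih => simpa [pow_succ', add_smul, add_comm] using hg.mul hζ ih

theorem pow_of_fix_radicals (hζ : ζ ^ n = 1) (hg : IsKummerSignature ζ x g e 0) (k : ℕ) :
    IsKummerSignature ζ x (g ^ k) (e ^ k) 0 := by
  induction k with
  | zero => simpa using one hζ
  | succ k ih => simpa [pow_succ'] using hg.mul hζ ih

theorem unique (hζ : IsPrimitiveRoot ζ n) (hx : ∀ i, x i ≠ 0)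
    (hg : IsKummerSignature ζ x g e v) (hg' : IsKummerSignature ζ x g e' v') :
    e = e' ∧ v = v' := by
  have hinj : ∀ a b : ZMod n, ζ ^ a.val = ζ ^ b.val → a = b := fun a b hab =>
    ZMod.val_injective n (hζ.pow_inj (ZMod.val_lt a) (ZMod.val_lt b) hab)
  exact ⟨hinj _ _ (hg.1.symm.trans hg'.1),
    funext fun i => hinj _ _ (mul_right_cancel₀ (hx i) ((hg.2 i).symm.trans (hg'.2 i)))⟩

theorem exists_of_pow_eq_algebraMap (hζ : IsPrimitiveRoot ζ n) {m : ι → ℕ} (hm : ∀ i, m i ∣ n)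
    {c : ι → K} (hx : ∀ i, x i ^ m i = algebraMap K L (c i)) (g : L ≃ₐ[K] L) :
    ∃ (e : (ZMod n)ˣ) (v : ι → ZMod n),
      (∀ i, (m i : ZMod n) * v i = 0) ∧ IsKummerSignature ζ x g e v := by
  obtain ⟨k, hk, hgζ⟩ :=
    hζ.eq_pow_of_pow_eq_one (ξ := g ζ) (by rw [← map_pow, hζ.pow_eq_one, map_one])
  have hcop : k.Coprime n := (hζ.pow_iff_coprime (Nat.pos_of_neZero n) k).mp
    (hgζ ▸ hζ.map_of_injective g.injective)
  have hgx : ∀ i, ∃ s : ZMod n, (m i : ZMod n) * s = 0 ∧ g (x i) = ζ ^ s.val * x i := fun i =>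
    hζ.exists_eq_pow_mul_of_pow_eq_pow (hm i) (by rw [← map_pow, hx i, AlgEquiv.commutes])
  choose v hv hgv using hgx
  refine ⟨ZMod.unitOfCoprime k hcop, v, hv, ?_, hgv⟩
  rw [ZMod.coe_unitOfCoprime, ZMod.val_natCast, Nat.mod_eq_of_lt hk, hgζ]

theorem exists_of_card_eq [Finite ι] (hζ : IsPrimitiveRoot ζ n) {m : ι → ℕ} (hm : ∀ i, m i ∣ n)
    {c : ι → K} (hx : ∀ i, x i ^ m i = algebraMap K L (c i))
    (hgen : adjoin K (insert ζ (Set.range x)) = ⊤)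
    (hcard : Nat.card (L ≃ₐ[K] L) = Nat.card (AdmissibleKummerSignature n m))
    (e : (ZMod n)ˣ) (v : ι → ZMod n) (hv : ∀ i, (m i : ZMod n) * v i = 0) :
    ∃ g : L ≃ₐ[K] L, IsKummerSignature ζ x g e v := by
  choose E V hV hsig using exists_of_pow_eq_algebraMap hζ hm hx
  let f : (L ≃ₐ[K] L) → AdmissibleKummerSignature n m := fun g => (E g, fun i => ⟨V g i, hV g i⟩)
  have hf : Function.Injective f := fun g h hgh => by
    simp only [f, Prod.mk.injEq, funext_iff, Subtype.mk.injEq] at hgh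
    exact ext hgen (hsig g) (by rw [hgh.1, funext hgh.2]; exact hsig h)
  obtain ⟨g, hg⟩ := (hf.bijective_of_nat_card_le hcard.ge).2 (e, fun i => ⟨v i, hv i⟩)
  simp only [f, Prod.mk.injEq, funext_iff, Subtype.mk.injEq] at hg
  exact ⟨g, hg.1 ▸ funext hg.2 ▸ hsig g⟩

end IsKummerSignature

end KummerSignature

theorem IsPrimitiveRoot.normal_adjoin_insert_range_of_pow_eq_algebraMap {K E ι : Type*}
    [Field K] [Field E] [Algebra K E] [IsAlgClosed E] [Fintype ι] {n : ℕ} [NeZero n] {ζ : E}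
    (hζ : IsPrimitiveRoot ζ n) {x : ι → E} {m : ι → ℕ} (hm : ∀ i, m i ∣ n) {c : ι → K}
    (hx : ∀ i, x i ^ m i = algebraMap K E (c i)) :
    Normal K (adjoin K (insert ζ (Set.range x))) := by
  let p : K[X] := (X ^ n - 1) * ∏ i, (X ^ m i - C (c i))
  have hp : p ≠ 0 := ((monic_X_pow_sub_C 1 (NeZero.ne n)).mul
    (monic_prod_of_monic _ _ fun i _ => monic_X_pow_sub_C _
      fun h => NeZero.ne n (Nat.eq_zero_of_zero_dvd (h ▸ hm i)))).ne_zero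
  have hroot : ∀ y : E, y ∈ p.rootSet E ↔ y ^ n = 1 ∨ ∃ i, y ^ m i = x i ^ m i := by
    intro y
    simp [p, mem_rootSet, hp, Finset.prod_eq_zero_iff, sub_eq_zero, hx]
  have hsplit : adjoin K (p.rootSet E) = adjoin K (insert ζ (Set.range x)) := by
    refine le_antisymm (adjoin_le_iff.mpr fun y hy => ?_) (adjoin_le_iff.mpr ?_)
    · have hζmem : ζ ∈ adjoin K (insert ζ (Set.range x)) := subset_adjoin _ _ (.inl rfl)
      rcases (hroot y).mp hy with hy | ⟨i, hy⟩
      · obtain ⟨k, -, rfl⟩ := hζ.eq_pow_of_pow_eq_one hy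
        exact pow_mem hζmem k
      · obtain ⟨k, -, rfl⟩ := hζ.exists_eq_pow_mul_of_pow_eq_pow (hm i) hy
        exact mul_mem (pow_mem hζmem _) (subset_adjoin _ _ (.inr ⟨i, rfl⟩))
    · rintro _ (rfl | ⟨i, rfl⟩) <;> refine subset_adjoin _ _ ((hroot _).mpr ?_)
      exacts [.inl hζ.pow_eq_one, .inr ⟨i, rfl⟩]
  rw [← hsplit]
  exact Normal.of_isSplittingField p
    (hFEp := adjoin_rootSet_isSplittingField (IsAlgClosed.splits _))

section DegreeTwoDelPezzo

variable {K L : Type*} [Field K] [Field L] [Algebra K L] {ζ : L}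

theorem closure_eq_top_of_isKummerSignature {x : Fin 3 → L} {σ τ ιa ιb ιc : L ≃ₐ[K] L}
    (hζ : IsPrimitiveRoot ζ 8) (hx : ∀ i, x i ≠ 0) (hcard : Nat.card (L ≃ₐ[K] L) = 128)
    (hσ : IsKummerSignature ζ x σ (-1 : ZMod 8) 0)
    (hτ : IsKummerSignature ζ x τ (3 : ZMod 8) 0)
    (hιa : IsKummerSignature ζ x ιa (1 : ZMod 8) ![4, 6, 6])
    (hιb : IsKummerSignature ζ x ιb (1 : ZMod 8) ![0, 2, 0])
    (hιc : IsKummerSignature ζ x ιc (1 : ZMod 8) ![0, 0, 2]) :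
    Subgroup.closure {σ, τ, ιa, ιb, ιc} = ⊤ := by
  have h8 := hζ.pow_eq_one
  let word : (Fin 2 × Fin 2) × (Fin 2 × Fin 4 × Fin 4) → L ≃ₐ[K] L :=
    fun ⟨⟨p, q⟩, ⟨i, j, k⟩⟩ =>
      ιa ^ (i : ℕ) * ιb ^ (j : ℕ) * ιc ^ (k : ℕ) * (σ ^ (p : ℕ) * τ ^ (q : ℕ))
  have hword : ∀ t : (Fin 2 × Fin 2) × (Fin 2 × Fin 4 × Fin 4), IsKummerSignature ζ x (word t)
      ((-1 : ZMod 8) ^ (t.1.1 : ℕ) * 3 ^ (t.1.2 : ℕ))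
      ((t.2.1 : ℕ) • (![4, 6, 6] : Fin 3 → ZMod 8) + (t.2.2.1 : ℕ) • ![0, 2, 0] +
        (t.2.2.2 : ℕ) • ![0, 0, 2]) := by
    rintro ⟨⟨p, q⟩, ⟨i, j, k⟩⟩
    simpa [add_comm, add_left_comm] using
      (((hιa.pow_of_fix_root h8 i).mul h8 (hιb.pow_of_fix_root h8 j)).mul h8
        (hιc.pow_of_fix_root h8 k)).mul h8
        ((hσ.pow_of_fix_radicals h8 p).mul h8 (hτ.pow_of_fix_radicals h8 q))
  have hunits : Function.Injective fun s : Fin 2 × Fin 2 =>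
      ((-1) ^ (s.1 : ℕ) * 3 ^ (s.2 : ℕ) : ZMod 8) := by decide
  have hvecs : Function.Injective fun t : Fin 2 × Fin 4 × Fin 4 =>
      (t.1 : ℕ) • (![4, 6, 6] : Fin 3 → ZMod 8) + (t.2.1 : ℕ) • ![0, 2, 0] +
        (t.2.2 : ℕ) • ![0, 0, 2] := by decide
  have hinj : Function.Injective word := fun s t hst => by
    obtain ⟨he, hv⟩ := (hword s).unique hζ hx (hst ▸ hword t)
    exact Prod.ext (hunits he) (hvecs hv)
  have hsub : {σ, τ, ιa, ιb, ιc} ⊆ (Subgroup.closure {σ, τ, ιa, ιb, ιc} : Set (L ≃ₐ[K] L)) :=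
    Subgroup.subset_closure
  have hmem : ∀ t, word t ∈ Subgroup.closure {σ, τ, ιa, ιb, ιc} := fun _ =>
    mul_mem (mul_mem (mul_mem (pow_mem (hsub (by simp)) _) (pow_mem (hsub (by simp)) _))
      (pow_mem (hsub (by simp)) _))
      (mul_mem (pow_mem (hsub (by simp)) _) (pow_mem (hsub (by simp)) _))
  have : Finite (L ≃ₐ[K] L) := Nat.finite_of_card_ne_zero (by rw [hcard]; norm_num)
  refine Subgroup.eq_top_of_le_card _ ?_
  calc Nat.card (L ≃ₐ[K] L) = Nat.card ((Fin 2 × Fin 2) × (Fin 2 × Fin 4 × Fin 4)) := by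
        simp [hcard]
    _ ≤ _ := Nat.card_le_card_of_injective (fun t => ⟨word t, hmem t⟩)
        fun s t hst => hinj (congrArg Subtype.val hst)

theorem exists_generators_of_card_aut_eq_128 {α β γ : L} (hζ : IsPrimitiveRoot ζ 8)
    (hα : α ≠ 0) (hβ : β ≠ 0) (hγ : γ ≠ 0) {A B C : K}
    (hαA : α ^ 2 = algebraMap K L A) (hβB : β ^ 4 = algebraMap K L B)
    (hγC : γ ^ 4 = algebraMap K L C) (hgen : adjoin K {ζ, α, β, γ} = ⊤)
    (hcard : Nat.card (L ≃ₐ[K] L) = 128) :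
    ∃ σ τ ιa ιb ιc : L ≃ₐ[K] L, Subgroup.closure {σ, τ, ιa, ιb, ιc} = ⊤ ∧
      (σ ζ = ζ⁻¹ ∧ τ ζ = ζ ^ 3 ∧ ιa ζ = ζ ∧ ιb ζ = ζ ∧ ιc ζ = ζ) ∧
      (σ α = α ∧ τ α = α ∧ ιa α = -α ∧ ιb α = α ∧ ιc α = α) ∧
      (σ β = β ∧ τ β = β ∧ ιa β = -ζ ^ 2 * β ∧ ιb β = ζ ^ 2 * β ∧ ιc β = β) ∧
      (σ γ = γ ∧ τ γ = γ ∧ ιa γ = -ζ ^ 2 * γ ∧ ιb γ = γ ∧ ιc γ = ζ ^ 2 * γ) := by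
  have hx : ∀ i, ![α, β, γ] i ^ ![2, 4, 4] i = algebraMap K L (![A, B, C] i) := by
    intro i; fin_cases i <;> assumption
  have hx0 : ∀ i, ![α, β, γ] i ≠ 0 := by intro i; fin_cases i <;> assumption
  have hgen' : adjoin K (insert ζ (Set.range ![α, β, γ])) = ⊤ := by
    rwa [Matrix.range_cons, Matrix.range_cons, Matrix.range_cons_empty]
  have hT : Nat.card (AdmissibleKummerSignature 8 (![2, 4, 4] : Fin 3 → ℕ)) = 128 := by
    rw [Nat.card_prod, Nat.card_pi, Fin.prod_univ_three]
    simp only [Nat.card_eq_fintype_card, ZMod.card_units_eq_totient]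
    decide
  have key := IsKummerSignature.exists_of_card_eq hζ (by decide) hx hgen' (hcard.trans hT.symm)
  obtain ⟨σ, hσ⟩ := key (-1) 0 (by simp)
  obtain ⟨τ, hτ⟩ := key (ZMod.unitOfCoprime 3 (by norm_num)) 0 (by simp)
  obtain ⟨ιa, hιa⟩ := key 1 ![4, 6, 6] (by decide)
  obtain ⟨ιb, hιb⟩ := key 1 ![0, 2, 0] (by decide)
  obtain ⟨ιc, hιc⟩ := key 1 ![0, 0, 2] (by decide)
  simp only [Units.val_neg, Units.val_one, ZMod.coe_unitOfCoprime, Nat.cast_ofNat] at hσ hτ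
  refine ⟨σ, τ, ιa, ιb, ιc, closure_eq_top_of_isKummerSignature hζ hx0 hcard hσ hτ hιa hιb hιc,
    ?_⟩
  have h4 : ζ ^ 4 = -1 :=
    (hζ.pow (by norm_num) (by norm_num : 8 = 4 * 2)).eq_neg_one_of_two_right
  have h7 : ζ ^ 7 = ζ⁻¹ := eq_inv_of_mul_eq_one_left (by rw [← pow_succ, hζ.pow_eq_one])
  have h6 : ζ ^ 6 = -ζ ^ 2 := by rw [show 6 = 4 + 2 by rfl, pow_add, h4, neg_one_mul]
  have hval : (1 : ZMod 8).val = 1 ∧ (2 : ZMod 8).val = 2 ∧ (3 : ZMod 8).val = 3 ∧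
      (4 : ZMod 8).val = 4 ∧ (6 : ZMod 8).val = 6 := ⟨rfl, rfl, rfl, rfl, rfl⟩
  simp only [IsKummerSignature, Fin.forall_fin_succ, IsEmpty.forall_iff] at hσ hτ hιa hιb hιc
  simp [hval, h4, h6, h7] at hσ hτ hιa hιb hιc
  simp [hσ, hτ, hιa, hιb, hιc]

end DegreeTwoDelPezzo

theorem IntermediateField.adjoin_eq_top_of_eq_adjoin_image {K E : Type*} [Field K] [Field E]
    [Algebra K E] {F : IntermediateField K E} {S : Set F} (h : F = adjoin K (Subtype.val '' S)) :
    adjoin K S = ⊤ :=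
  F.lift_injective (by rw [lift_adjoin, lift_top, ← h])

/-- Proposition 3.1 (field-theoretic content): for nonzero integers `A, B, C` with
chosen complex 4-th roots `a, b, c`, `ζ = e^{πi/4}`, and
`F = ℚ(ζ, a², b/a, c/a)` of degree `128` over `ℚ`, the extension `F/ℚ` is Galois
and its Galois group is generated by automorphisms `σ, τ, ι_a, ι_b, ι_c` acting on
the generators `ζ, a², b/a, c/a` as described (with `i = ζ²`). -/
theorem generic_galois_group_of_degree_two_delPezzo
    (A B C : ℤ) (hA : A ≠ 0) (hB : B ≠ 0) (hC : C ≠ 0)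
    (a b c : ℂ) (ha : a ^ 4 = (A : ℂ)) (hb : b ^ 4 = (B : ℂ)) (hc : c ^ 4 = (C : ℂ))
    (ζ : ℂ) (hζ : ζ = Complex.exp (Real.pi * Complex.I / 4))
    (F : IntermediateField ℚ ℂ)
    (hF : F = IntermediateField.adjoin ℚ {ζ, a ^ 2, b / a, c / a})
    (hdeg : Module.finrank ℚ F = 128) :
    IsGalois ℚ F ∧
    ∃ σ τ ιa ιb ιc : F ≃ₐ[ℚ] F,
      Subgroup.closure {σ, τ, ιa, ιb, ιc} = (⊤ : Subgroup (F ≃ₐ[ℚ] F)) ∧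
      (∀ x : F, (x : ℂ) = ζ →
        ((σ x : ℂ) = ζ⁻¹ ∧ (τ x : ℂ) = ζ ^ 3 ∧ (ιa x : ℂ) = ζ ∧
          (ιb x : ℂ) = ζ ∧ (ιc x : ℂ) = ζ)) ∧
      (∀ x : F, (x : ℂ) = a ^ 2 →
        ((σ x : ℂ) = a ^ 2 ∧ (τ x : ℂ) = a ^ 2 ∧ (ιa x : ℂ) = -(a ^ 2) ∧
          (ιb x : ℂ) = a ^ 2 ∧ (ιc x : ℂ) = a ^ 2)) ∧
      (∀ x : F, (x : ℂ) = b / a →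
        ((σ x : ℂ) = b / a ∧ (τ x : ℂ) = b / a ∧ (ιa x : ℂ) = -ζ ^ 2 * (b / a) ∧
          (ιb x : ℂ) = ζ ^ 2 * (b / a) ∧ (ιc x : ℂ) = b / a)) ∧
      (∀ x : F, (x : ℂ) = c / a →
        ((σ x : ℂ) = c / a ∧ (τ x : ℂ) = c / a ∧ (ιa x : ℂ) = -ζ ^ 2 * (c / a) ∧
          (ιb x : ℂ) = c / a ∧ (ιc x : ℂ) = ζ ^ 2 * (c / a))) := by
  have hζ8 : IsPrimitiveRoot ζ 8 := by
    convert Complex.isPrimitiveRoot_exp 8 (by norm_num) using 2; rw [hζ]; ring_nf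
  have ha0 : a ≠ 0 := fun h => hA (by simpa [h] using ha.symm)
  have hb0 : b ≠ 0 := fun h => hB (by simpa [h] using hb.symm)
  have hc0 : c ≠ 0 := fun h => hC (by simpa [h] using hc.symm)
  have hx : ∀ i, ![a ^ 2, b / a, c / a] i ^ ![2, 4, 4] i =
      algebraMap ℚ ℂ (![(A : ℚ), B / A, C / A] i) := by
    intro i; fin_cases i <;> simp [← ha, ← hb, ← hc, ← pow_mul, div_pow]
  have hF' : F = adjoin ℚ (insert ζ (Set.range ![a ^ 2, b / a, c / a])) := by
    rwa [Matrix.range_cons, Matrix.range_cons, Matrix.range_cons_empty]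
  have hnormal : Normal ℚ F :=
    hF' ▸ hζ8.normal_adjoin_insert_range_of_pow_eq_algebraMap (by decide) hx
  have hfin : FiniteDimensional ℚ F := Module.finite_of_finrank_pos (by rw [hdeg]; norm_num)
  have hgal : IsGalois ℚ F := ⟨⟩
  have hmem : ∀ y ∈ ({ζ, a ^ 2, b / a, c / a} : Set ℂ), y ∈ F := fun y hy =>
    hF ▸ subset_adjoin ℚ _ hy
  obtain ⟨σ, τ, ιa, ιb, ιc, hgen, hζs, has, hbs, hcs⟩ :=
    exists_generators_of_card_aut_eq_128 (K := ℚ) (ζ := ⟨ζ, hmem ζ (by simp)⟩)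
      (α := ⟨a ^ 2, hmem _ (by simp)⟩) (β := ⟨b / a, hmem _ (by simp)⟩)
      (γ := ⟨c / a, hmem _ (by simp)⟩) (A := A) (B := B / A) (C := C / A)
      (IsPrimitiveRoot.coe_submonoidClass_iff.mp hζ8)
      (ne_of_apply_ne Subtype.val (by simp [ha0]))
      (ne_of_apply_ne Subtype.val (by simp [ha0, hb0]))
      (ne_of_apply_ne Subtype.val (by simp [ha0, hc0]))
      (Subtype.ext (hx 0)) (Subtype.ext (hx 1)) (Subtype.ext (hx 2))
      (adjoin_eq_top_of_eq_adjoin_image (by simpa [Set.image_insert_eq] using hF))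
      (by rw [IsGalois.card_aut_eq_finrank, hdeg])
  refine ⟨hgal, σ, τ, ιa, ιb, ιc, hgen, ?_, ?_, ?_, ?_⟩ <;> rintro ⟨y, hy⟩ (rfl : y = _)
  · simpa [Subtype.ext_iff] using hζs
  · simpa [Subtype.ext_iff] using has
  · simpa [Subtype.ext_iff] using hbs
  · simpa [Subtype.ext_iff] using hcs
end
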